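/- arXiv:2401.18008 — 3 statements merged into one kernel-verified Lean document; each statement's English description precedes it below -/
import Mathlib

section
/- Multiplicativity relation for twisted divisor sums: Let k be a positive integer, χ₁, χ₂ Dirichlet characters modulo N₁ and N₂ respectively, and let χ = χ₁χ₂ be the product character modulo N₁N₂. Then for all positive integers m and n: σ_k(χ₁,χ₂,m)·σ_k(χ₁,χ₂,n) = Σ_{δ∣gcd(m,n)} χ(δ)·δ^k·σ_k(χ₁,χ₂, mn/δ²), the sum over positive divisors δ of gcd(m,n). -/
/-!
With `F x = χ₁(x) χ₂(mn/x) x^k`, complete multiplicativity turns the left side into the sum of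
`F (a * b)` over `a ∣ m`, `b ∣ n`, and the right side into the sum of `F (d * e)` over
`d ∣ gcd(m, n)`, `e ∣ mn/d²` (the factor `χ(d) d^k` is absorbed). The two index sets are in
bijection: `(a, b)` splits as `(d, a/d · b)` with `d = gcd(a, n/b)`, and `(d, e)` merges back to
`(d · e/g, g)` with `g = gcd(e, n/d)`. After writing `a = a₁ d`, `n/b = c₁ d` with `a₁, c₁`
coprime, both composites are read off from `gcd(a₁ b, b c₁) = b`.
-/

noncomputable section

/-- The twisted divisor sum `σ_k(χ₁,χ₂,n) = Σ_{δ∣n} χ₁(δ)·χ₂(n/δ)·δ^k`. -/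
def twistedSigma {N₁ N₂ : ℕ} (k : ℤ) (χ₁ : DirichletCharacter ℂ N₁)
    (χ₂ : DirichletCharacter ℂ N₂) (n : ℕ) : ℂ :=
  ∑ δ ∈ n.divisors, χ₁ δ * χ₂ (n / δ) * (δ : ℂ) ^ k

/-- The product character `χ₁χ₂` modulo `N₁N₂` (both factors lifted to level `N₁N₂`). -/
def prodChar {N₁ N₂ : ℕ} (χ₁ : DirichletCharacter ℂ N₁) (χ₂ : DirichletCharacter ℂ N₂) :
    DirichletCharacter ℂ (N₁ * N₂) :=
  DirichletCharacter.changeLevel (dvd_mul_right N₁ N₂) χ₁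
    * DirichletCharacter.changeLevel (dvd_mul_left N₂ N₁) χ₂

namespace Nat

theorem gcd_split_mem_and_merge_eq {m n a b d e : ℕ} (ha : a ∈ m.divisors)
    (hb : b ∈ n.divisors) (hd : a.gcd (n / b) = d) (he : a / d * b = e) :
    d ∈ (m.gcd n).divisors ∧ e ∈ (m * n / d ^ 2).divisors ∧
      d * (e / e.gcd (n / d)) = a ∧ e.gcd (n / d) = b := by
  obtain ⟨⟨a', rfl⟩, hm⟩ := mem_divisors.mp ha
  obtain ⟨⟨c, rfl⟩, hn⟩ := mem_divisors.mp hb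
  have hb0 : 0 < b := pos_of_ne_zero (left_ne_zero_of_mul hn)
  obtain ⟨g, a₁, c₁, hg, hcop, rfl, rfl⟩ :=
    exists_coprime' (gcd_pos_of_pos_left c (pos_of_ne_zero (left_ne_zero_of_mul hm)))
  rw [Nat.mul_div_cancel_left _ hb0, gcd_mul_right, hcop.gcd_eq_one, one_mul] at hd
  subst hd he
  have hmn : a₁ * g * a' * (b * (c₁ * g)) / g ^ 2 = a₁ * b * (a' * c₁) :=
    Nat.div_eq_of_eq_mul_left (pow_pos hg 2) (by ring)
  have hnd : b * (c₁ * g) / g = b * c₁ := Nat.div_eq_of_eq_mul_left hg (by ring)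
  have hgcd : (a₁ * b).gcd (b * c₁) = b := by
    rw [mul_comm a₁, gcd_mul_left, hcop.gcd_eq_one, mul_one]
  rw [Nat.mul_div_cancel _ hg, hmn, hnd, hgcd, Nat.mul_div_cancel _ hb0]
  refine ⟨mem_divisors.mpr ⟨Nat.dvd_gcd ⟨a₁ * a', by ring⟩ ⟨b * c₁, by ring⟩, ?_⟩,
    mem_divisors.mpr ⟨dvd_mul_right _ _, ?_⟩, mul_comm _ _, rfl⟩
  · exact (gcd_pos_of_pos_left _ (pos_of_ne_zero hm)).ne'
  · simp_all

theorem gcd_merge_mem_and_split_eq {m n d e a b : ℕ} (hd : d ∈ (m.gcd n).divisors)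
    (he : e ∈ (m * n / d ^ 2).divisors) (hb : e.gcd (n / d) = b) (ha : d * (e / b) = a) :
    a ∈ m.divisors ∧ b ∈ n.divisors ∧ a.gcd (n / b) = d ∧ a / d * b = e := by
  obtain ⟨he, hmn⟩ := mem_divisors.mp he
  have hd0 : 0 < d := pos_of_ne_zero (by rintro rfl; simp at hmn)
  obtain ⟨m₁, rfl⟩ := (dvd_of_mem_divisors hd).trans (gcd_dvd_left m n)
  obtain ⟨n₁, rfl⟩ := (dvd_of_mem_divisors hd).trans (gcd_dvd_right _ n)
  have hmn' : d * m₁ * (d * n₁) / d ^ 2 = m₁ * n₁ :=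
    Nat.div_eq_of_eq_mul_left (pow_pos hd0 2) (by ring)
  rw [hmn'] at hmn he
  rw [Nat.mul_div_cancel_left _ hd0] at hb
  obtain ⟨g, e₁, n₂, hg, hcop, rfl, rfl⟩ :=
    exists_coprime' (gcd_pos_of_pos_left n₁ (pos_of_ne_zero (ne_zero_of_dvd_ne_zero hmn he)))
  rw [gcd_mul_right, hcop.gcd_eq_one, one_mul] at hb
  subst hb
  rw [Nat.mul_div_cancel _ hg] at ha
  subst ha
  have he₁ : e₁ ∣ m₁ := by
    refine hcop.dvd_of_dvd_mul_right (Nat.dvd_of_mul_dvd_mul_right hg ?_)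
    rwa [mul_assoc]
  have hnd : d * (n₂ * g) / g = d * n₂ := Nat.div_eq_of_eq_mul_left hg (by ring)
  rw [hnd, gcd_mul_left, hcop.gcd_eq_one, mul_one, Nat.mul_div_cancel_left _ hd0]
  refine ⟨mem_divisors.mpr ⟨mul_dvd_mul_left d he₁, ?_⟩,
    mem_divisors.mpr ⟨⟨d * n₂, by ring⟩, ?_⟩, rfl, rfl⟩ <;> simp_all

theorem sum_divisors_sum_divisors_mul {M : Type*} [AddCommMonoid M] (m n : ℕ) (F : ℕ → M) :
    ∑ a ∈ m.divisors, ∑ b ∈ n.divisors, F (a * b) =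
      ∑ d ∈ (m.gcd n).divisors, ∑ e ∈ (m * n / d ^ 2).divisors, F (d * e) := by
  rw [← Finset.sum_product', Finset.sum_sigma']
  refine Finset.sum_nbij' (fun p => ⟨p.1.gcd (n / p.2), p.1 / p.1.gcd (n / p.2) * p.2⟩)
    (fun q => (q.1 * (q.2 / q.2.gcd (n / q.1)), q.2.gcd (n / q.1))) ?_ ?_ ?_ ?_ ?_
  · rintro ⟨a, b⟩ hab
    obtain ⟨ha, hb⟩ := Finset.mem_product.mp hab
    obtain ⟨hd, he, -⟩ := gcd_split_mem_and_merge_eq ha hb rfl rfl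
    exact Finset.mem_sigma.mpr ⟨hd, he⟩
  · rintro ⟨d, e⟩ hde
    obtain ⟨hd, he⟩ := Finset.mem_sigma.mp hde
    obtain ⟨ha, hb, -⟩ := gcd_merge_mem_and_split_eq hd he rfl rfl
    exact Finset.mem_product.mpr ⟨ha, hb⟩
  · rintro ⟨a, b⟩ hab
    obtain ⟨ha, hb⟩ := Finset.mem_product.mp hab
    obtain ⟨-, -, h₁, h₂⟩ := gcd_split_mem_and_merge_eq ha hb rfl rfl
    exact Prod.ext h₁ h₂
  · rintro ⟨d, e⟩ hde
    obtain ⟨hd, he⟩ := Finset.mem_sigma.mp hde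
    obtain ⟨-, -, h₁, h₂⟩ := gcd_merge_mem_and_split_eq hd he rfl rfl
    dsimp only at h₁ h₂ ⊢
    rw [h₁, h₂]
  · rintro ⟨a, b⟩ -
    dsimp only
    rw [← mul_assoc, Nat.mul_div_cancel' (gcd_dvd_left _ _)]

end Nat

theorem DirichletCharacter.changeLevel_natCast {R : Type*} [CommMonoidWithZero R] {N M : ℕ}
    (h : N ∣ M) (χ : DirichletCharacter R N) {a : ℕ} (ha : IsUnit (a : ZMod M)) :
    changeLevel h χ a = χ a := by
  rw [← ha.unit_spec, changeLevel_eq_cast_of_dvd χ h ha.unit, ha.unit_spec, ZMod.cast_natCast h]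

theorem prodChar_natCast {N₁ N₂ : ℕ} (χ₁ : DirichletCharacter ℂ N₁)
    (χ₂ : DirichletCharacter ℂ N₂) (a : ℕ) : prodChar χ₁ χ₂ a = χ₁ a * χ₂ a := by
  by_cases ha : IsUnit (a : ZMod (N₁ * N₂))
  · rw [prodChar, MulChar.mul_apply, DirichletCharacter.changeLevel_natCast _ χ₁ ha,
      DirichletCharacter.changeLevel_natCast _ χ₂ ha]
  · rw [MulChar.map_nonunit _ ha]
    rw [ZMod.isUnit_iff_coprime, Nat.coprime_mul_iff_right, not_and_or,
      ← ZMod.isUnit_iff_coprime, ← ZMod.isUnit_iff_coprime] at ha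
    rcases ha with h₁ | h₂
    · rw [MulChar.map_nonunit χ₁ h₁, zero_mul]
    · rw [MulChar.map_nonunit χ₂ h₂, mul_zero]

section

variable {N₁ N₂ : ℕ} (k : ℤ) (χ₁ : DirichletCharacter ℂ N₁) (χ₂ : DirichletCharacter ℂ N₂)

theorem twistedSigma_mul_twistedSigma (m n : ℕ) :
    twistedSigma k χ₁ χ₂ m * twistedSigma k χ₁ χ₂ n =
      ∑ a ∈ m.divisors, ∑ b ∈ n.divisors,
        χ₁ ↑(a * b) * χ₂ ↑(m * n / (a * b)) * ((a * b : ℕ) : ℂ) ^ k := by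
  rw [twistedSigma, twistedSigma, Finset.sum_mul_sum]
  refine Finset.sum_congr rfl fun a ha => Finset.sum_congr rfl fun b hb => ?_
  rw [← Nat.div_mul_div_comm (Nat.dvd_of_mem_divisors ha) (Nat.dvd_of_mem_divisors hb)]
  push_cast
  simp only [map_mul, mul_zpow]
  ring

theorem prodChar_mul_twistedSigma_div_sq {N d : ℕ} (hd : d ^ 2 ∣ N) :
    prodChar χ₁ χ₂ d * (d : ℂ) ^ k * twistedSigma k χ₁ χ₂ (N / d ^ 2) =
      ∑ e ∈ (N / d ^ 2).divisors,
        χ₁ ↑(d * e) * χ₂ ↑(N / (d * e)) * ((d * e : ℕ) : ℂ) ^ k := by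
  rw [twistedSigma, Finset.mul_sum]
  refine Finset.sum_congr rfl fun e he => ?_
  obtain ⟨⟨q, hq⟩, hN⟩ := Nat.mem_divisors.mp he
  have hd0 : 0 < d := pos_of_ne_zero (by rintro rfl; simp at hN)
  have he0 : 0 < e := pos_of_ne_zero (left_ne_zero_of_mul (hq ▸ hN))
  have hde : N / (d * e) = d * q := by
    refine Nat.div_eq_of_eq_mul_left (mul_pos hd0 he0) ?_
    rw [← Nat.div_mul_cancel hd, hq]
    ring
  rw [hq, Nat.mul_div_cancel_left _ he0, hde, prodChar_natCast]
  push_cast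
  simp only [map_mul, mul_zpow]
  ring

end

theorem twisted_sigma_multiplicativity_general
    {N₁ N₂ : ℕ}
    (k : ℕ)
    (χ₁ : DirichletCharacter ℂ N₁) (χ₂ : DirichletCharacter ℂ N₂)
    (m n : ℕ) :
    twistedSigma k χ₁ χ₂ m * twistedSigma k χ₁ χ₂ n
      = ∑ δ ∈ (Nat.gcd m n).divisors,
          prodChar χ₁ χ₂ δ * (δ : ℂ) ^ (k : ℕ)
            * twistedSigma k χ₁ χ₂ (m * n / δ ^ 2) := by
  rw [twistedSigma_mul_twistedSigma, Nat.sum_divisors_sum_divisors_mul m n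
    fun x => χ₁ x * χ₂ ↑(m * n / x) * (x : ℂ) ^ (k : ℤ)]
  refine Finset.sum_congr rfl fun d hd => ?_
  obtain ⟨hdm, hdn⟩ := Nat.dvd_gcd_iff.mp (Nat.dvd_of_mem_divisors hd)
  rw [← zpow_natCast, prodChar_mul_twistedSigma_div_sq _ _ _ (sq d ▸ mul_dvd_mul hdm hdn)]

theorem twisted_sigma_multiplicativity
    {N₁ N₂ : ℕ}
    (k : ℕ) (hk : 0 < k)
    (χ₁ : DirichletCharacter ℂ N₁) (χ₂ : DirichletCharacter ℂ N₂)
    (m n : ℕ) (hm : 0 < m) (hn : 0 < n) :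
    twistedSigma k χ₁ χ₂ m * twistedSigma k χ₁ χ₂ n
      = ∑ δ ∈ (Nat.gcd m n).divisors,
          prodChar χ₁ χ₂ δ * (δ : ℂ) ^ (k : ℕ)
            * twistedSigma k χ₁ χ₂ (m * n / δ ^ 2) :=
  twisted_sigma_multiplicativity_general k χ₁ χ₂ m n
end
end

section
/- Dirichlet series of twisted divisor sums at square arguments (Lemma 5.2): Let k be a positive integer, χ₁, χ₂ Dirichlet characters modulo N₁ and N₂ respectively, and χ = χ₁χ₂ the product character modulo N₁N₂. For every s ∈ ℂ with Re(s) > 2k + 1, the series Σ_{n≥1} σ_k(χ₁,χ₂,n²)·n^{−s} converges absolutely and equals L(s−2k,χ₁²)·L(s,χ₂²)·L(s−k,χ) / L(2s−2k,χ²). -/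
noncomputable section

namespace TwistedAux

open ArithmeticFunction Finset

/-! ### pure algebra lemmas -/

lemma sum_range_double (f : ℕ → ℂ) (n : ℕ) :
    ∑ j ∈ range (2 * n), f j = ∑ i ∈ range n, (f (2 * i) + f (2 * i + 1)) := by
  induction n with
  | zero => simp
  | succ n ih =>
    have h : 2 * (n + 1) = (2 * n + 1) + 1 := by omega
    rw [h, Finset.sum_range_succ, Finset.sum_range_succ, Finset.sum_range_succ, ih]
    ring

lemma L1 (w : ℂ) (e : ℕ) :
    ∑ i ∈ range (e + 1), (if i = 0 then 1 else if i = 2 then -(w ^ 2) else 0) * w ^ (e - i)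
      = if e ≤ 1 then w ^ e else 0 := by
  match e with
  | 0 => simp
  | 1 => simp [Finset.sum_range_succ]
  | (e + 2) =>
    rw [if_neg (by omega), Finset.sum_range_succ', Finset.sum_range_succ',
      Finset.sum_range_succ', Finset.sum_eq_zero
        (fun i _ => by rw [if_neg (by omega), if_neg (by omega), zero_mul])]
    norm_num
    ring

lemma L2 (w y : ℂ) (e : ℕ) :
    ∑ i ∈ range (e + 1), (if i ≤ 1 then w ^ i else 0) * y ^ (e - i)
      = if e = 0 then 1 else y ^ e + w * y ^ (e - 1) := by
  match e with
  | 0 => simp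
  | (e + 1) =>
    rw [if_neg (by omega), Finset.sum_range_succ', Finset.sum_range_succ',
      Finset.sum_eq_zero (fun i _ => by rw [if_neg (by omega), zero_mul])]
    norm_num
    ring

lemma L3 (x y w : ℂ) (hw : w = x * y ∨ (x = 0 ∧ w = 0) ∨ (y = 0 ∧ w = 0)) (e : ℕ) :
    ∑ i ∈ range (e + 1),
        (if i = 0 then 1 else (y ^ 2) ^ i + w * (y ^ 2) ^ (i - 1)) * (x ^ 2) ^ (e - i)
      = ∑ j ∈ range (2 * e + 1), x ^ j * y ^ (2 * e - j) := by
  rcases hw with rfl | ⟨hx, hww⟩ | ⟨hy, hww⟩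
  · rw [Finset.sum_range_succ', Finset.sum_range_succ, sum_range_double]
    have hmain : ∀ i ∈ range e,
        (if i + 1 = 0 then 1 else (y ^ 2) ^ (i + 1) + x * y * (y ^ 2) ^ (i + 1 - 1))
            * (x ^ 2) ^ (e - (i + 1))
          = (fun m => x ^ (2 * m) * y ^ (2 * e - 2 * m)
              + x ^ (2 * m + 1) * y ^ (2 * e - (2 * m + 1))) (e - 1 - i) := by
      intro i hi
      rw [mem_range] at hi
      rw [if_neg (by omega)]
      simp only
      have h1 : 2 * e - 2 * (e - 1 - i) = 2 * i + 2 := by omega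
      have h2 : 2 * e - (2 * (e - 1 - i) + 1) = 2 * i + 1 := by omega
      have h3 : e - (i + 1) = e - 1 - i := by omega
      have h4 : i + 1 - 1 = i := by omega
      rw [h1, h2, h3, h4]
      ring
    rw [Finset.sum_congr rfl hmain,
      Finset.sum_range_reflect (fun m => x ^ (2 * m) * y ^ (2 * e - 2 * m)
        + x ^ (2 * m + 1) * y ^ (2 * e - (2 * m + 1))) e]
    have hlast : 2 * e - 2 * e = 0 := by omega
    rw [hlast]
    simp [pow_mul]
  · subst hx hww
    rcases Nat.eq_zero_or_pos e with rfl | he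
    · simp
    rw [Finset.sum_eq_single_of_mem e (self_mem_range_succ e)
        (fun b hbm hb => by
          rw [mem_range] at hbm
          rw [show ((0:ℂ) ^ 2) ^ (e - b) = 0 by
            rw [zero_pow (two_ne_zero), zero_pow (by omega)], mul_zero]),
      Finset.sum_eq_single_of_mem 0 (mem_range.mpr (by omega))
        (fun b _ hb => by rw [zero_pow hb, zero_mul])]
    rw [if_neg (by omega), Nat.sub_self, pow_zero, pow_zero, Nat.sub_zero]
    ring
  · subst hy hww
    rw [Finset.sum_eq_single_of_mem 0 (mem_range.mpr (by omega))
        (fun b _ hb => by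
          rw [if_neg hb, show ((0:ℂ) ^ 2) ^ b + 0 * ((0:ℂ) ^ 2) ^ (b - 1) = 0 by
            rw [zero_pow (two_ne_zero), zero_pow hb]; ring, zero_mul]),
      Finset.sum_eq_single_of_mem (2 * e) (mem_range.mpr (by omega))
        (fun b hb hb' => by
          rw [mem_range] at hb
          rw [show (0:ℂ) ^ (2 * e - b) = 0 from zero_pow (by omega), mul_zero])]
    rw [if_pos rfl, Nat.sub_zero, Nat.sub_self, pow_zero, one_mul, mul_one]
    ring


/-! ### character times power as arithmetic function -/

variable {N : ℕ}

/-- `n ↦ χ(n)·n^j` as an arithmetic function. -/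
def dchar (χ : DirichletCharacter ℂ N) (j : ℕ) : ArithmeticFunction ℂ :=
  ⟨fun n => if n = 0 then 0 else χ n * (n : ℂ) ^ j, rfl⟩

lemma dchar_apply (χ : DirichletCharacter ℂ N) (j : ℕ) {n : ℕ} (hn : n ≠ 0) :
    dchar χ j n = χ n * (n : ℂ) ^ j := if_neg hn

lemma dchar_mul_apply (χ : DirichletCharacter ℂ N) (j : ℕ) {m n : ℕ} (hm : m ≠ 0) (hn : n ≠ 0) :
    dchar χ j (m * n) = dchar χ j m * dchar χ j n := by
  rw [dchar_apply χ j (mul_ne_zero hm hn), dchar_apply χ j hm, dchar_apply χ j hn]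
  push_cast
  rw [map_mul]
  ring

lemma dchar_isMult (χ : DirichletCharacter ℂ N) (j : ℕ) : (dchar χ j).IsMultiplicative := by
  refine ⟨?_, @fun m n _ => ?_⟩
  · rw [dchar_apply χ j one_ne_zero]
    simp
  · rcases eq_or_ne m 0 with rfl | hm
    · simp
    rcases eq_or_ne n 0 with rfl | hn
    · simp
    exact dchar_mul_apply χ j hm hn

lemma dchar_prime_pow (χ : DirichletCharacter ℂ N) (j : ℕ) {p : ℕ} (hp : p ≠ 0) (e : ℕ) :
    dchar χ j (p ^ e) = (χ p * (p : ℂ) ^ j) ^ e := by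
  rw [dchar_apply χ j (pow_ne_zero e hp)]
  push_cast
  rw [map_pow]
  ring

/-! ### restriction to squares -/

/-- `sqA f` is the arithmetic function supported on squares with `sqA f (m^2) = f m`. -/
def sqA (f : ArithmeticFunction ℂ) : ArithmeticFunction ℂ :=
  ⟨fun n => if Nat.sqrt n ^ 2 = n then f (Nat.sqrt n) else 0, by simp⟩

lemma sqA_sq (f : ArithmeticFunction ℂ) (m : ℕ) : sqA f (m ^ 2) = f m := by
  simp [sqA, Nat.sqrt_eq']

lemma sqA_not_sq (f : ArithmeticFunction ℂ) {n : ℕ} (h : ¬ ∃ m, m ^ 2 = n) : sqA f n = 0 := by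
  have h' : ¬ (Nat.sqrt n ^ 2 = n) := fun hc => h ⟨_, hc⟩
  simp [sqA, h']

lemma not_sq_mul {m n : ℕ} (h : Nat.Coprime m n) (hm : ¬ ∃ a, a ^ 2 = m) :
    ¬ ∃ t, t ^ 2 = m * n := by
  rintro ⟨t, ht⟩
  obtain ⟨d, hd⟩ := exists_eq_pow_of_mul_eq_pow (α := ℕ)
    (by rw [gcd_eq_nat_gcd, h.gcd_eq_one]; exact isUnit_one) ht.symm
  exact hm ⟨d, hd.symm⟩

lemma sqA_mul (f g : ArithmeticFunction ℂ) : sqA f * sqA g = sqA (f * g) := by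
  ext n
  by_cases h : ∃ m, m ^ 2 = n
  · obtain ⟨m, rfl⟩ := h
    rw [sqA_sq, mul_apply, mul_apply]
    symm
    apply Finset.sum_of_injOn (fun q : ℕ × ℕ => (q.1 ^ 2, q.2 ^ 2))
    · intro a _ b _ hab
      rw [Prod.mk.injEq] at hab
      exact Prod.ext (Nat.pow_left_injective two_ne_zero hab.1)
        (Nat.pow_left_injective two_ne_zero hab.2)
    · intro q hq
      rw [Finset.mem_coe, Nat.mem_divisorsAntidiagonal] at hq ⊢
      exact ⟨by rw [← mul_pow, hq.1], pow_ne_zero 2 hq.2⟩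
    · intro q hq hq'
      rw [Nat.mem_divisorsAntidiagonal] at hq
      by_contra hne
      have h1 : ∃ a, a ^ 2 = q.1 := by
        by_contra h1
        exact hne (by rw [sqA_not_sq f h1, zero_mul])
      have h2 : ∃ b, b ^ 2 = q.2 := by
        by_contra h2
        exact hne (by rw [sqA_not_sq g h2, mul_zero])
      obtain ⟨a, ha⟩ := h1
      obtain ⟨b, hb⟩ := h2
      have hab : a * b = m := by
        have : (a * b) ^ 2 = m ^ 2 := by rw [mul_pow, ha, hb, hq.1]
        exact Nat.pow_left_injective two_ne_zero this
      refine hq' ⟨(a, b), ?_, by simp [ha, hb]⟩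
      rw [Finset.mem_coe, Nat.mem_divisorsAntidiagonal]
      exact ⟨hab, fun h0 => by subst h0; simp at hq⟩
    · intro q _
      rw [sqA_sq, sqA_sq]
  · rw [sqA_not_sq _ h, mul_apply]
    apply Finset.sum_eq_zero
    intro q hq
    rw [Nat.mem_divisorsAntidiagonal] at hq
    by_contra hne
    have h1 : ∃ a, a ^ 2 = q.1 := by
      by_contra h1
      exact hne (by rw [sqA_not_sq f h1, zero_mul])
    have h2 : ∃ b, b ^ 2 = q.2 := by
      by_contra h2
      exact hne (by rw [sqA_not_sq g h2, mul_zero])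
    obtain ⟨a, ha⟩ := h1
    obtain ⟨b, hb⟩ := h2
    exact h ⟨a * b, by rw [mul_pow, ha, hb, hq.1]⟩

lemma sqA_isMult {f : ArithmeticFunction ℂ} (hf : f.IsMultiplicative) :
    (sqA f).IsMultiplicative := by
  refine ⟨?_, @fun m n hmn => ?_⟩
  · have h := sqA_sq f 1
    rw [one_pow] at h
    rw [h, hf.1]
  · by_cases hm : ∃ a, a ^ 2 = m
    · by_cases hn : ∃ b, b ^ 2 = n
      · obtain ⟨a, rfl⟩ := hm
        obtain ⟨b, rfl⟩ := hn
        rw [← mul_pow, sqA_sq, sqA_sq, sqA_sq]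
        apply hf.2
        have h1 : a.Coprime (b ^ 2) := (Nat.coprime_pow_left_iff two_pos _ _).mp hmn
        exact (Nat.coprime_pow_right_iff two_pos _ _).mp h1
      · rw [sqA_not_sq f hn, mul_zero, sqA_not_sq f
          (by rw [mul_comm]; exact not_sq_mul hmn.symm hn)]
    · rw [sqA_not_sq f hm, zero_mul, sqA_not_sq f (not_sq_mul hmn hm)]

lemma sqA_one : sqA 1 = 1 := by
  ext n
  by_cases h : ∃ m, m ^ 2 = n
  · obtain ⟨m, rfl⟩ := h
    rw [sqA_sq, ArithmeticFunction.one_apply, ArithmeticFunction.one_apply]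
    rcases eq_or_ne m 1 with rfl | hm
    · simp
    · rw [if_neg hm, if_neg (fun hc => hm (Nat.pow_left_injective two_ne_zero
        (by simpa using hc : m ^ 2 = 1 ^ 2)))]
  · rw [sqA_not_sq _ h, ArithmeticFunction.one_apply, if_neg (fun h1 => h ⟨1, by simp [h1]⟩)]

lemma mul_prime_pow_apply (f g : ArithmeticFunction ℂ) {p : ℕ} (hp : p.Prime) (e : ℕ) :
    (f * g) (p ^ e) = ∑ i ∈ Finset.range (e + 1), f (p ^ i) * g (p ^ (e - i)) := by
  rw [mul_apply, Nat.sum_divisorsAntidiagonal (f := fun a b => f a * g b),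
    Nat.sum_divisors_prime_pow hp]
  refine Finset.sum_congr rfl fun i hi => ?_
  rw [Finset.mem_range] at hi
  rw [Nat.pow_div (by omega) hp.pos]


/-! ### the specific arithmetic functions -/

variable {N₁ N₂ : ℕ} (k : ℕ) (χ₁ : DirichletCharacter ℂ N₁) (χ₂ : DirichletCharacter ℂ N₂)

/-- `μ·ψ` where `ψ(n) = χ²(n) n^{2k}`. -/
def muPsi : ArithmeticFunction ℂ :=
  ((ArithmeticFunction.moebius : ArithmeticFunction ℤ) : ArithmeticFunction ℂ).pmul
    (dchar ((prodChar χ₁ χ₂) ^ 2) (2 * k))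

/-- square-supported Möbius-type factor. -/
def hA : ArithmeticFunction ℂ := sqA (muPsi k χ₁ χ₂)

/-- square-supported `ψ` factor. -/
def EA : ArithmeticFunction ℂ := sqA (dchar ((prodChar χ₁ χ₂) ^ 2) (2 * k))

/-- `σ_k(χ₁,χ₂,n²)` as an arithmetic function. -/
def FA : ArithmeticFunction ℂ :=
  ⟨fun n => twistedSigma k χ₁ χ₂ (n ^ 2), by simp [twistedSigma]⟩

lemma muPsi_isMult : (muPsi k χ₁ χ₂).IsMultiplicative :=
  ArithmeticFunction.isMultiplicative_moebius.intCast.pmul (dchar_isMult _ _)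

lemma hA_isMult : (hA k χ₁ χ₂).IsMultiplicative := sqA_isMult (muPsi_isMult k χ₁ χ₂)

lemma twistedSigma_eq_mul (n : ℕ) :
    twistedSigma (k : ℤ) χ₁ χ₂ n = (dchar χ₁ k * dchar χ₂ 0) n := by
  rcases eq_or_ne n 0 with rfl | hn
  · simp [twistedSigma]
  rw [mul_apply, Nat.sum_divisorsAntidiagonal (f := fun a b => dchar χ₁ k a * dchar χ₂ 0 b),
    twistedSigma]
  refine Finset.sum_congr rfl fun d hd => ?_
  have hd0 : d ≠ 0 := (Nat.pos_of_mem_divisors hd).ne'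
  have hdvd : d ∣ n := (Nat.mem_divisors.mp hd).1
  have hnd0 : n / d ≠ 0 := (Nat.div_pos (Nat.le_of_dvd (Nat.pos_of_ne_zero hn) hdvd)
    (Nat.pos_of_ne_zero hd0)).ne'
  rw [dchar_apply _ _ hd0, dchar_apply _ _ hnd0, zpow_natCast, pow_zero]
  ring

lemma FA_isMult : (FA k χ₁ χ₂).IsMultiplicative := by
  have hσ : (dchar χ₁ k * dchar χ₂ 0).IsMultiplicative :=
    (dchar_isMult _ _).mul (dchar_isMult _ _)
  refine ⟨?_, @fun m n hmn => ?_⟩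
  · show twistedSigma (k : ℤ) χ₁ χ₂ (1 ^ 2) = 1
    rw [one_pow, twistedSigma_eq_mul, hσ.1]
  · show twistedSigma (k : ℤ) χ₁ χ₂ ((m * n) ^ 2)
      = twistedSigma (k : ℤ) χ₁ χ₂ (m ^ 2) * twistedSigma (k : ℤ) χ₁ χ₂ (n ^ 2)
    rw [twistedSigma_eq_mul, twistedSigma_eq_mul, twistedSigma_eq_mul, mul_pow,
      hσ.2 (hmn.pow 2 2)]

/-! ### values at prime powers -/

variable {p : ℕ}

lemma FA_prime_pow (hp : p.Prime) (e : ℕ) :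
    FA k χ₁ χ₂ (p ^ e) = ∑ j ∈ Finset.range (2 * e + 1),
      (χ₁ p * (p : ℂ) ^ k) ^ j * (χ₂ p) ^ (2 * e - j) := by
  have h1 : FA k χ₁ χ₂ (p ^ e) = (dchar χ₁ k * dchar χ₂ 0) (p ^ (2 * e)) := by
    show twistedSigma (k : ℤ) χ₁ χ₂ ((p ^ e) ^ 2) = _
    rw [twistedSigma_eq_mul, ← pow_mul, mul_comm e 2]
  rw [h1, mul_prime_pow_apply _ _ hp]
  refine Finset.sum_congr rfl fun j hj => ?_
  rw [dchar_prime_pow _ _ hp.pos.ne', dchar_prime_pow _ _ hp.pos.ne', pow_zero, mul_one]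

lemma hA_prime_pow (hp : p.Prime) (e : ℕ) :
    hA k χ₁ χ₂ (p ^ e) = if e = 0 then 1 else if e = 2 then
      -((prodChar χ₁ χ₂ p * (p : ℂ) ^ k) ^ 2) else 0 := by
  have hψ : dchar ((prodChar χ₁ χ₂) ^ 2) (2 * k) p
      = (prodChar χ₁ χ₂ p * (p : ℂ) ^ k) ^ 2 := by
    rw [dchar_apply _ _ hp.pos.ne', MulChar.pow_apply' _ two_ne_zero, mul_comm 2 k, pow_mul]
    ring
  rcases Nat.even_or_odd e with ⟨f, hf⟩ | ⟨f, hf⟩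
  · have he : p ^ e = (p ^ f) ^ 2 := by rw [← pow_mul]; congr 1; omega
    rw [he, hA, sqA_sq, muPsi, ArithmeticFunction.pmul_apply, ArithmeticFunction.intCoe_apply]
    match f, hf with
    | 0, hf =>
      rw [pow_zero, ArithmeticFunction.moebius_apply_one, if_pos (by omega)]
      rw [(dchar_isMult ((prodChar χ₁ χ₂) ^ 2) (2 * k)).1]
      norm_num
    | 1, hf =>
      rw [pow_one, ArithmeticFunction.moebius_apply_prime hp, hψ,
        if_neg (by omega), if_pos (by omega)]
      push_cast
      ring
    | (f + 2), hf =>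
      rw [ArithmeticFunction.moebius_apply_prime_pow hp (by omega), if_neg (by omega),
        if_neg (by omega), if_neg (by omega)]
      push_cast
      ring
  · have hn : ¬ ∃ m, m ^ 2 = p ^ e := by
      rintro ⟨m, hm⟩
      have hdvd : m ∣ p ^ e := by rw [← hm]; exact dvd_pow_self m two_ne_zero
      obtain ⟨j, hj, rfl⟩ := (Nat.dvd_prime_pow hp).mp hdvd
      rw [← pow_mul] at hm
      have := Nat.pow_right_injective hp.two_le hm
      omega
    rw [hA, sqA_not_sq _ hn, if_neg (by omega), if_neg (by omega)]

lemma t_prime_pow (hp : p.Prime) (e : ℕ) :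
    (hA k χ₁ χ₂ * dchar (prodChar χ₁ χ₂) k) (p ^ e)
      = if e ≤ 1 then (prodChar χ₁ χ₂ p * (p : ℂ) ^ k) ^ e else 0 := by
  rw [mul_prime_pow_apply _ _ hp]
  rw [Finset.sum_congr rfl (fun i _ => by
    rw [hA_prime_pow k χ₁ χ₂ hp, dchar_prime_pow _ _ hp.pos.ne'])]
  exact L1 _ e

lemma u_prime_pow (hp : p.Prime) (e : ℕ) :
    ((hA k χ₁ χ₂ * dchar (prodChar χ₁ χ₂) k) * dchar (χ₂ ^ 2) 0) (p ^ e)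
      = if e = 0 then 1 else ((χ₂ ^ 2) p) ^ e
          + (prodChar χ₁ χ₂ p * (p : ℂ) ^ k) * ((χ₂ ^ 2) p) ^ (e - 1) := by
  rw [mul_prime_pow_apply _ _ hp]
  rw [Finset.sum_congr rfl (fun i _ => by
    rw [t_prime_pow k χ₁ χ₂ hp, dchar_prime_pow _ _ hp.pos.ne', pow_zero, mul_one])]
  exact L2 _ _ e

lemma z_cases [NeZero N₁] [NeZero N₂] (hp : p.Prime) :
    prodChar χ₁ χ₂ p * (p : ℂ) ^ k = (χ₁ p * (p : ℂ) ^ k) * χ₂ p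
      ∨ (χ₁ p * (p : ℂ) ^ k = 0 ∧ prodChar χ₁ χ₂ p * (p : ℂ) ^ k = 0)
      ∨ (χ₂ p = 0 ∧ prodChar χ₁ χ₂ p * (p : ℂ) ^ k = 0) := by
  haveI : NeZero (N₁ * N₂) := ⟨mul_ne_zero (NeZero.ne N₁) (NeZero.ne N₂)⟩
  by_cases hc : Nat.Coprime p (N₁ * N₂)
  · left
    have h1 := DirichletCharacter.changeLevel_eq_cast_of_dvd χ₁ (dvd_mul_right N₁ N₂)
      (ZMod.unitOfCoprime p hc)
    have h2 := DirichletCharacter.changeLevel_eq_cast_of_dvd χ₂ (dvd_mul_left N₂ N₁)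
      (ZMod.unitOfCoprime p hc)
    rw [ZMod.coe_unitOfCoprime] at h1 h2
    rw [ZMod.cast_natCast (dvd_mul_right N₁ N₂)] at h1
    rw [ZMod.cast_natCast (dvd_mul_left N₂ N₁)] at h2
    have : prodChar χ₁ χ₂ p = χ₁ p * χ₂ p := by
      rw [prodChar, MulChar.mul_apply, h1, h2]
    rw [this]
    ring
  · right
    have hz : prodChar χ₁ χ₂ p = 0 :=
      (prodChar χ₁ χ₂).map_nonunit (by rwa [ZMod.isUnit_iff_coprime p (N₁ * N₂)])
    rw [Nat.coprime_mul_iff_right] at hc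
    rcases Decidable.not_and_iff_or_not.mp hc with h1 | h2
    · exact Or.inl ⟨by rw [χ₁.map_nonunit (by rwa [ZMod.isUnit_iff_coprime p N₁]), zero_mul],
        by rw [hz, zero_mul]⟩
    · exact Or.inr ⟨χ₂.map_nonunit (by rwa [ZMod.isUnit_iff_coprime p N₂]),
        by rw [hz, zero_mul]⟩

lemma full_prime_pow [NeZero N₁] [NeZero N₂] (hp : p.Prime) (e : ℕ) :
    (((hA k χ₁ χ₂ * dchar (prodChar χ₁ χ₂) k) * dchar (χ₂ ^ 2) 0) * dchar (χ₁ ^ 2) (2 * k))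
        (p ^ e)
      = FA k χ₁ χ₂ (p ^ e) := by
  rw [mul_prime_pow_apply _ _ hp, FA_prime_pow k χ₁ χ₂ hp]
  set x := χ₁ p * (p : ℂ) ^ k with hx
  set y := χ₂ p with hy
  have hY : (χ₂ ^ 2) p = y ^ 2 := MulChar.pow_apply' _ two_ne_zero _
  have hX : ∀ i, dchar (χ₁ ^ 2) (2 * k) (p ^ i) = (x ^ 2) ^ i := by
    intro i
    rw [dchar_prime_pow _ _ hp.pos.ne', MulChar.pow_apply' _ two_ne_zero, hx,
      mul_comm 2 k, pow_mul]
    ring_nf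
  rw [Finset.sum_congr rfl (fun i _ => by
    rw [u_prime_pow k χ₁ χ₂ hp, hX, hY])]
  exact L3 x y _ (z_cases k χ₁ χ₂ hp) e

lemma FA_eq [NeZero N₁] [NeZero N₂] :
    FA k χ₁ χ₂
      = ((hA k χ₁ χ₂ * dchar (prodChar χ₁ χ₂) k) * dchar (χ₂ ^ 2) 0) * dchar (χ₁ ^ 2) (2 * k) := by
  rw [ArithmeticFunction.IsMultiplicative.eq_iff_eq_on_prime_powers _ (FA_isMult k χ₁ χ₂) _
    ((((hA_isMult k χ₁ χ₂).mul (dchar_isMult _ _)).mul (dchar_isMult _ _)).mul (dchar_isMult _ _))]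
  intro q i hq
  exact (full_prime_pow k χ₁ χ₂ hq i).symm


/-! ### L-series lemmas -/

open LSeries

lemma LSeriesSummable_dchar (χ : DirichletCharacter ℂ N) (j : ℕ) {s : ℂ}
    (h : (j : ℝ) + 1 < s.re) :
    LSeriesSummable (fun n => dchar χ j n) s := by
  apply LSeriesSummable_of_le_const_mul_rpow h
  refine ⟨1, fun n hn => ?_⟩
  rw [dchar_apply _ _ hn, norm_mul, norm_pow, Complex.norm_natCast]
  have h1 : ‖χ (n : ZMod N)‖ * (n : ℝ) ^ j ≤ 1 * (n : ℝ) ^ j := by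
    gcongr
    exact χ.norm_le_one _
  refine h1.trans (le_of_eq ?_)
  rw [show (j : ℝ) + 1 - 1 = (j : ℝ) by ring, Real.rpow_natCast]

lemma LSeries_dchar [NeZero N] (χ : DirichletCharacter ℂ N) (j : ℕ) {s : ℂ}
    (h : (j : ℝ) + 1 < s.re) :
    LSeries (fun n => dchar χ j n) s = DirichletCharacter.LFunction χ (s - j) := by
  have hre : 1 < (s - (j : ℂ)).re := by
    rw [Complex.sub_re, Complex.natCast_re]
    linarith
  rw [DirichletCharacter.LFunction_eq_LSeries χ hre]
  apply tsum_congr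
  intro n
  rcases eq_or_ne n 0 with rfl | hn
  · rw [LSeries.term_zero, LSeries.term_zero]
  · rw [LSeries.term_of_ne_zero hn, LSeries.term_of_ne_zero hn, dchar_apply _ _ hn,
      Complex.cpow_sub _ _ (by exact_mod_cast hn : (n : ℂ) ≠ 0), Complex.cpow_natCast,
      div_div_eq_mul_div]

lemma norm_moebius_le_one (n : ℕ) : ‖((ArithmeticFunction.moebius n : ℤ) : ℂ)‖ ≤ 1 := by
  by_cases h : Squarefree n
  · rw [ArithmeticFunction.moebius_apply_of_squarefree h]
    push_cast
    rw [norm_pow, norm_neg, norm_one, one_pow]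
  · rw [ArithmeticFunction.moebius_eq_zero_of_not_squarefree h]
    norm_num

variable [NeZero N₁] [NeZero N₂]

lemma LSeriesSummable_hA {s : ℂ} (h : (2 * (k : ℝ)) + 1 < s.re) :
    LSeriesSummable (fun n => hA k χ₁ χ₂ n) s := by
  have h' : (k : ℝ) + 1 < s.re := by have : (0:ℝ) ≤ (k:ℝ) := Nat.cast_nonneg k; linarith
  apply LSeriesSummable_of_le_const_mul_rpow h'
  refine ⟨1, fun n hn => ?_⟩
  rw [show (k : ℝ) + 1 - 1 = (k : ℝ) by ring, Real.rpow_natCast, one_mul]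
  by_cases hsq : ∃ m, m ^ 2 = n
  · obtain ⟨m, rfl⟩ := hsq
    have hm : m ≠ 0 := fun h0 => hn (by rw [h0]; norm_num)
    rw [hA, sqA_sq, muPsi, ArithmeticFunction.pmul_apply, ArithmeticFunction.intCoe_apply,
      dchar_apply _ _ hm, norm_mul, norm_mul, norm_pow, Complex.norm_natCast]
    calc ‖((ArithmeticFunction.moebius m : ℤ) : ℂ)‖
          * (‖((prodChar χ₁ χ₂) ^ 2) (m : ZMod (N₁ * N₂))‖ * (m : ℝ) ^ (2 * k))
        ≤ 1 * (1 * (m : ℝ) ^ (2 * k)) := by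
          gcongr
          · exact norm_moebius_le_one m
          · exact DirichletCharacter.norm_le_one _ _
      _ = ((m ^ 2 : ℕ) : ℝ) ^ k := by
          push_cast
          ring
  · rw [hA, sqA_not_sq _ hsq]
    norm_num

lemma term_EA (s : ℂ) (m : ℕ) :
    LSeries.term (fun n => EA k χ₁ χ₂ n) s (m ^ 2)
      = LSeries.term (fun n => ((prodChar χ₁ χ₂) ^ 2) n) (2 * s - 2 * (k : ℂ)) m := by
  rcases eq_or_ne m 0 with rfl | hm
  · rw [show (0 : ℕ) ^ 2 = 0 by norm_num, LSeries.term_zero, LSeries.term_zero]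
  · have hm0 : (m : ℂ) ≠ 0 := Nat.cast_ne_zero.mpr hm
    rw [LSeries.term_of_ne_zero (pow_ne_zero 2 hm), LSeries.term_of_ne_zero hm,
      EA, sqA_sq, dchar_apply _ _ hm]
    have hsq : ((m ^ 2 : ℕ) : ℂ) ^ s = (m : ℂ) ^ (2 * s) := by
      push_cast
      rw [show ((m : ℂ) ^ 2) = ((m : ℂ) ^ (2 : ℕ)) by norm_num,
        ← Complex.natCast_cpow_natCast_mul m 2 s]
      norm_num
    rw [hsq, show (2 * s - 2 * (k : ℂ)) = 2 * s - ((2 * k : ℕ) : ℂ) by push_cast; ring,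
      Complex.cpow_sub _ _ hm0, Complex.cpow_natCast, div_div_eq_mul_div]

lemma sq_range_vanish (s : ℂ) :
    ∀ x ∉ Set.range (fun m : ℕ => m ^ 2),
      LSeries.term (fun n => EA k χ₁ χ₂ n) s x = 0 := by
  intro x hx
  have hx0 : x ≠ 0 := fun h0 => hx ⟨0, by simp [h0]⟩
  rw [LSeries.term_of_ne_zero hx0, EA, sqA_not_sq _ (fun ⟨m, hm⟩ => hx ⟨m, hm⟩), zero_div]

lemma hsq_inj : Function.Injective (fun m : ℕ => m ^ 2) :=
  fun _ _ h => Nat.pow_left_injective two_ne_zero h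

lemma LSeriesSummable_EA {s : ℂ} (h : 1 < (2 * s - 2 * (k : ℂ)).re) :
    LSeriesSummable (fun n => EA k χ₁ χ₂ n) s := by
  haveI : NeZero (N₁ * N₂) := ⟨mul_ne_zero (NeZero.ne N₁) (NeZero.ne N₂)⟩
  rw [LSeriesSummable, ← Function.Injective.summable_iff hsq_inj (sq_range_vanish k χ₁ χ₂ s)]
  have heq : (LSeries.term (fun n => EA k χ₁ χ₂ n) s) ∘ (fun m : ℕ => m ^ 2)
      = fun m => LSeries.term (fun n => ((prodChar χ₁ χ₂) ^ 2) n) (2 * s - 2 * (k : ℂ)) m :=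
    funext fun m => term_EA k χ₁ χ₂ s m
  rw [heq]
  exact DirichletCharacter.LSeriesSummable_of_one_lt_re _ h

lemma LSeries_EA {s : ℂ} (h : 1 < (2 * s - 2 * (k : ℂ)).re) :
    LSeries (fun n => EA k χ₁ χ₂ n) s
      = DirichletCharacter.LFunction ((prodChar χ₁ χ₂) ^ 2) (2 * s - 2 * (k : ℂ)) := by
  haveI : NeZero (N₁ * N₂) := ⟨mul_ne_zero (NeZero.ne N₁) (NeZero.ne N₂)⟩
  rw [DirichletCharacter.LFunction_eq_LSeries _ h]
  unfold LSeries
  rw [← Function.Injective.tsum_eq hsq_inj (f := LSeries.term (fun n => EA k χ₁ χ₂ n) s)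
    (fun x hx => by
      by_contra hmem
      exact hx (sq_range_vanish k χ₁ χ₂ s x hmem))]
  exact tsum_congr fun m => term_EA k χ₁ χ₂ s m

lemma muPsi_mul_psi : muPsi k χ₁ χ₂ * dchar ((prodChar χ₁ χ₂) ^ 2) (2 * k) = 1 := by
  ext n
  rcases eq_or_ne n 0 with rfl | hn
  · simp
  rw [mul_apply, Nat.sum_divisorsAntidiagonal
    (f := fun a b => muPsi k χ₁ χ₂ a * dchar ((prodChar χ₁ χ₂) ^ 2) (2 * k) b)]
  have hterm : ∀ d ∈ n.divisors,
      muPsi k χ₁ χ₂ d * dchar ((prodChar χ₁ χ₂) ^ 2) (2 * k) (n / d)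
        = ((ArithmeticFunction.moebius d : ℤ) : ℂ)
            * dchar ((prodChar χ₁ χ₂) ^ 2) (2 * k) n := by
    intro d hd
    have hd0 : d ≠ 0 := (Nat.pos_of_mem_divisors hd).ne'
    have hdvd : d ∣ n := (Nat.mem_divisors.mp hd).1
    have hnd0 : n / d ≠ 0 := (Nat.div_pos (Nat.le_of_dvd (Nat.pos_of_ne_zero hn) hdvd)
      (Nat.pos_of_ne_zero hd0)).ne'
    rw [muPsi, ArithmeticFunction.pmul_apply, ArithmeticFunction.intCoe_apply, mul_assoc,
      ← dchar_mul_apply _ _ hd0 hnd0, Nat.mul_div_cancel' hdvd]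
  rw [Finset.sum_congr rfl hterm, ← Finset.sum_mul]
  have hz : ∑ d ∈ n.divisors, ((ArithmeticFunction.moebius d : ℤ) : ℂ)
      = (1 : ArithmeticFunction ℂ) n := by
    rw [← ArithmeticFunction.coe_moebius_mul_coe_zeta (R := ℂ),
      ArithmeticFunction.coe_mul_zeta_apply]
    exact Finset.sum_congr rfl fun d _ => (ArithmeticFunction.intCoe_apply).symm
  rw [hz]
  rcases eq_or_ne n 1 with rfl | hn1
  · simp [ArithmeticFunction.one_apply, dchar_apply _ _ one_ne_zero]
  · simp [ArithmeticFunction.one_apply, hn1]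

lemma hA_mul_EA : hA k χ₁ χ₂ * EA k χ₁ χ₂ = 1 := by
  rw [hA, EA, sqA_mul, muPsi_mul_psi, sqA_one]

end TwistedAux

open TwistedAux in
open DirichletCharacter in
theorem twisted_sigma_squares_dirichlet_series
    {N₁ N₂ : ℕ} [NeZero N₁] [NeZero N₂]
    (k : ℕ) (hk : 0 < k)
    (χ₁ : DirichletCharacter ℂ N₁) (χ₂ : DirichletCharacter ℂ N₂)
    (s : ℂ) (hs : 2 * (k : ℝ) + 1 < s.re) :
    LSeriesSummable (fun n => twistedSigma k χ₁ χ₂ (n ^ 2)) s ∧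
    LSeries (fun n => twistedSigma k χ₁ χ₂ (n ^ 2)) s
      = LFunction (χ₁ ^ 2) (s - 2 * k) * LFunction (χ₂ ^ 2) s
          * LFunction (prodChar χ₁ χ₂) (s - k)
          / LFunction (prodChar χ₁ χ₂ ^ 2) (2 * s - 2 * k) := by
  haveI : NeZero (N₁ * N₂) := ⟨mul_ne_zero (NeZero.ne N₁) (NeZero.ne N₂)⟩
  have hk1 : (1 : ℝ) ≤ (k : ℝ) := by exact_mod_cast hk
  have hs1 : ((0 : ℕ) : ℝ) + 1 < s.re := by push_cast; linarith
  have hsk : ((k : ℕ) : ℝ) + 1 < s.re := by push_cast; linarith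
  have hs2k : ((2 * k : ℕ) : ℝ) + 1 < s.re := by push_cast; linarith
  have hsE : 1 < (2 * s - 2 * (k : ℂ)).re := by
    have hre : (2 * s - 2 * (k : ℂ)).re = 2 * s.re - 2 * (k : ℝ) := by
      simp [Complex.sub_re, Complex.mul_re]
    rw [hre]; linarith
  have S1 : LSeriesSummable (fun n => dchar (χ₁ ^ 2) (2 * k) n) s :=
    LSeriesSummable_dchar _ _ hs2k
  have S2 : LSeriesSummable (fun n => dchar (χ₂ ^ 2) 0 n) s :=
    LSeriesSummable_dchar _ _ hs1
  have S3 : LSeriesSummable (fun n => dchar (prodChar χ₁ χ₂) k n) s :=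
    LSeriesSummable_dchar _ _ hsk
  have Sh : LSeriesSummable (fun n => hA k χ₁ χ₂ n) s :=
    LSeriesSummable_hA k χ₁ χ₂ hs
  have SE : LSeriesSummable (fun n => EA k χ₁ χ₂ n) s :=
    LSeriesSummable_EA k χ₁ χ₂ hsE
  have hFA := FA_eq k χ₁ χ₂
  have hcoe : (fun n => twistedSigma (k : ℤ) χ₁ χ₂ (n ^ 2)) = fun n => FA k χ₁ χ₂ n := rfl
  have St : LSeriesSummable (fun n => (hA k χ₁ χ₂ * dchar (prodChar χ₁ χ₂) k) n) s :=
    ArithmeticFunction.LSeriesSummable_mul Sh S3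
  have Su : LSeriesSummable
      (fun n => ((hA k χ₁ χ₂ * dchar (prodChar χ₁ χ₂) k) * dchar (χ₂ ^ 2) 0) n) s :=
    ArithmeticFunction.LSeriesSummable_mul St S2
  have SF : LSeriesSummable (fun n =>
      (((hA k χ₁ χ₂ * dchar (prodChar χ₁ χ₂) k) * dchar (χ₂ ^ 2) 0)
        * dchar (χ₁ ^ 2) (2 * k)) n) s :=
    ArithmeticFunction.LSeriesSummable_mul Su S1
  constructor
  · rw [hcoe, hFA]
    exact SF
  · rw [hcoe, hFA]
    rw [ArithmeticFunction.LSeries_mul' Su S1, ArithmeticFunction.LSeries_mul' St S2,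
      ArithmeticFunction.LSeries_mul' Sh S3]
    have V1 : LSeries (fun n => dchar (χ₁ ^ 2) (2 * k) n) s
        = LFunction (χ₁ ^ 2) (s - 2 * (k : ℂ)) := by
      rw [LSeries_dchar _ _ hs2k]
      congr 1
      push_cast
      ring
    have V2 : LSeries (fun n => dchar (χ₂ ^ 2) 0 n) s = LFunction (χ₂ ^ 2) s := by
      rw [LSeries_dchar _ _ hs1]
      norm_num
    have V3 : LSeries (fun n => dchar (prodChar χ₁ χ₂) k n) s
        = LFunction (prodChar χ₁ χ₂) (s - (k : ℂ)) := LSeries_dchar _ _ hsk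
    have hEval : LSeries (fun n => EA k χ₁ χ₂ n) s
        = LFunction ((prodChar χ₁ χ₂) ^ 2) (2 * s - 2 * (k : ℂ)) :=
      LSeries_EA k χ₁ χ₂ hsE
    have hne : LFunction ((prodChar χ₁ χ₂) ^ 2) (2 * s - 2 * (k : ℂ)) ≠ 0 := by
      apply LFunction_ne_zero_of_one_le_re
      · right
        intro h1
        rw [h1] at hsE
        simp at hsE
      · exact le_of_lt hsE
    have hinv : LSeries (fun n => hA k χ₁ χ₂ n) s
        * LFunction ((prodChar χ₁ χ₂) ^ 2) (2 * s - 2 * (k : ℂ)) = 1 := by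
      rw [← hEval, ← ArithmeticFunction.LSeries_mul' Sh SE, hA_mul_EA]
      have hδ : (fun n => (1 : ArithmeticFunction ℂ) n) = LSeries.delta :=
        funext fun n => by simp [ArithmeticFunction.one_apply, LSeries.delta]
      rw [hδ, LSeries_delta, Pi.one_apply]
    rw [V1, V2, V3, eq_div_iff hne]
    linear_combination (LFunction (prodChar χ₁ χ₂) (s - (k : ℂ))
      * LFunction (χ₂ ^ 2) s * LFunction (χ₁ ^ 2) (s - 2 * (k : ℂ))) * hinv
end
end

section
/- Divisibility-restricted Dirichlet series of twisted divisor sums at square arguments (Lemma 5.3): Let k be a positive integer, χ₁, χ₂ Dirichlet characters modulo N₁ and N₂ respectively, and χ = χ₁χ₂ the product character modulo N₁N₂. Let δ = 2^j·δ′ be a positive integer with δ′ odd and squarefree, and set ε = 0 if j is even and ε = 1 if j is odd. Then for every s ∈ ℂ with Re(s) > 2k + 1 one has Σ_{n≥1, δ∣n²} σ_k(χ₁,χ₂, n²/δ)·n^{−s} = [ (2^{⌈j/2⌉}·δ′)^{−s} · σ_k(χ₁,χ₂, 2^ε·δ′) / σ_{k−s}(χ, 2^ε·δ′) ] · Σ_{n≥1}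 σ_k(χ₁,χ₂, n²)·n^{−s} (in particular σ_{k−s}(χ, 2^ε·δ′) ≠ 0 in this range, and both series converge absolutely). -/
noncomputable section

/-- The divisor sum `σ_t(ψ,n) = Σ_{δ∣n} ψ(δ)·δ^t` with complex exponent `t`,
where `δ^t = exp(t·log δ)`. -/
def sigmaC {M : ℕ} (t : ℂ) (ψ : DirichletCharacter ℂ M) (n : ℕ) : ℂ :=
  ∑ δ ∈ n.divisors, ψ δ * (δ : ℂ) ^ t

namespace TSAux

open Finset Complex ArithmeticFunction

lemma chi_nat_mul {M : ℕ} (χ : DirichletCharacter ℂ M) (a b : ℕ) :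
    χ (↑(a * b)) = χ a * χ b := by
  push_cast
  exact map_mul χ _ _

lemma chi_nat_pow {M : ℕ} (χ : DirichletCharacter ℂ M) (a i : ℕ) :
    χ (↑(a ^ i)) = (χ a) ^ i := by
  push_cast
  exact map_pow χ _ _

lemma chi_nat_one {M : ℕ} (χ : DirichletCharacter ℂ M) : χ ((1 : ℕ) : ZMod M) = 1 := by
  rw [Nat.cast_one, map_one]

lemma prodChar_apply {N₁ N₂ : ℕ} (χ₁ : DirichletCharacter ℂ N₁) (χ₂ : DirichletCharacter ℂ N₂)
    (e : ℕ) : prodChar χ₁ χ₂ (e : ZMod (N₁ * N₂)) = χ₁ e * χ₂ e := by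
  by_cases h : IsUnit ((e : ZMod (N₁ * N₂)))
  · obtain ⟨u, hu⟩ := h
    have h1 : DirichletCharacter.changeLevel (dvd_mul_right N₁ N₂) χ₁ (e : ZMod (N₁ * N₂))
        = χ₁ e := by
      rw [← hu, DirichletCharacter.changeLevel_eq_cast_of_dvd, hu, ZMod.cast_natCast
        (dvd_mul_right N₁ N₂)]
    have h2 : DirichletCharacter.changeLevel (dvd_mul_left N₂ N₁) χ₂ (e : ZMod (N₁ * N₂))
        = χ₂ e := by
      rw [← hu, DirichletCharacter.changeLevel_eq_cast_of_dvd, hu, ZMod.cast_natCast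
        (dvd_mul_left N₂ N₁)]
    rw [prodChar, MulChar.mul_apply, h1, h2]
  · rw [MulChar.map_nonunit _ h]
    rw [ZMod.isUnit_iff_coprime, Nat.coprime_mul_iff_right] at h
    rcases not_and_or.mp h with h | h
    · rw [MulChar.map_nonunit χ₁ (fun hu => h ((ZMod.isUnit_iff_coprime e N₁).mp hu)), zero_mul]
    · rw [MulChar.map_nonunit χ₂ (fun hu => h ((ZMod.isUnit_iff_coprime e N₂).mp hu)), mul_zero]

variable {N₁ N₂ : ℕ} (k : ℕ) (χ₁ : DirichletCharacter ℂ N₁) (χ₂ : DirichletCharacter ℂ N₂)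

def f1 : ArithmeticFunction ℂ :=
  ⟨fun n => if n = 0 then 0 else χ₁ n * (n : ℂ) ^ k, by simp⟩

def f2 : ArithmeticFunction ℂ :=
  ⟨fun n => if n = 0 then 0 else χ₂ n, by simp⟩

def T : ArithmeticFunction ℂ := f1 k χ₁ * f2 χ₂

lemma T_apply (n : ℕ) : T k χ₁ χ₂ n = twistedSigma (k : ℤ) χ₁ χ₂ n := by
  rcases eq_or_ne n 0 with rfl | hn
  · simp [twistedSigma]
  · rw [T, mul_apply, Nat.sum_divisorsAntidiagonal (fun a b => f1 k χ₁ a * f2 χ₂ b), twistedSigma]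
    refine Finset.sum_congr rfl fun d hd => ?_
    have hd0 : d ≠ 0 := Nat.pos_of_mem_divisors hd |>.ne'
    have hnd0 : n / d ≠ 0 :=
      (Nat.div_pos (Nat.le_of_dvd (Nat.pos_of_ne_zero hn) (Nat.dvd_of_mem_divisors hd))
        (Nat.pos_of_mem_divisors hd)).ne'
    simp only [f1, f2, ArithmeticFunction.coe_mk, if_neg hd0, if_neg hnd0]
    rw [zpow_natCast]
    ring

lemma f1_mult : (f1 k χ₁).IsMultiplicative := by
  constructor
  · simp [f1, chi_nat_one]
  · intro m n _
    rcases eq_or_ne m 0 with rfl | hm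
    · simp [f1]
    rcases eq_or_ne n 0 with rfl | hn
    · simp [f1]
    simp only [f1, ArithmeticFunction.coe_mk, if_neg hm, if_neg hn, if_neg (mul_ne_zero hm hn)]
    rw [chi_nat_mul]
    push_cast
    ring

lemma f2_mult : (f2 χ₂).IsMultiplicative := by
  constructor
  · simp [f2, chi_nat_one]
  · intro m n _
    rcases eq_or_ne m 0 with rfl | hm
    · simp [f2]
    rcases eq_or_ne n 0 with rfl | hn
    · simp [f2]
    simp only [f2, ArithmeticFunction.coe_mk, if_neg hm, if_neg hn, if_neg (mul_ne_zero hm hn)]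
    rw [chi_nat_mul]

lemma T_mult : (T k χ₁ χ₂).IsMultiplicative := (f1_mult k χ₁).mul (f2_mult χ₂)

lemma T_one : T k χ₁ χ₂ 1 = 1 := (T_mult k χ₁ χ₂).1

lemma T_pp (p : ℕ) (hp : p.Prime) (m : ℕ) :
    T k χ₁ χ₂ (p ^ m) = ∑ i ∈ range (m + 1), (χ₁ p * (p : ℂ) ^ k) ^ i * (χ₂ p) ^ (m - i) := by
  rw [T_apply, twistedSigma, Nat.sum_divisors_prime_pow hp]
  refine Finset.sum_congr rfl fun i hi => ?_
  have him : i ≤ m := Nat.lt_succ_iff.mp (Finset.mem_range.mp hi)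
  rw [Nat.pow_div him hp.pos, chi_nat_pow, chi_nat_pow, zpow_natCast]
  push_cast
  rw [mul_pow, ← pow_mul, ← pow_mul, mul_comm i k]
  ring



section Srec
variable (α β : ℂ)

def S (m : ℕ) : ℂ := ∑ i ∈ Finset.range (m + 1), α ^ i * β ^ (m - i)

lemma S_succ₂ (m : ℕ) : S α β (m + 1) = α * S α β m + β ^ (m + 1) := by
  rw [S, Finset.sum_range_succ']
  simp only [Nat.sub_zero, pow_zero, one_mul]
  rw [S, Finset.mul_sum]
  congr 1
  refine Finset.sum_congr rfl fun i hi => ?_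
  have h : m + 1 - (i + 1) = m - i := by omega
  rw [h, pow_succ]
  ring

lemma S_rec (m : ℕ) : S α β (m + 2) + (α * β) * S α β m = (α + β) * S α β (m + 1) := by
  have h1 := S_succ₂ α β (m + 1)
  have h2 := S_succ₂ α β m
  linear_combination h1 - β * h2

end Srec

variable {N₁ N₂ : ℕ} (k : ℕ) (χ₁ : DirichletCharacter ℂ N₁) (χ₂ : DirichletCharacter ℂ N₂)

lemma T_pp' (p : ℕ) (hp : p.Prime) (m : ℕ) :
    T k χ₁ χ₂ (p ^ m) = S (χ₁ p * (p : ℂ) ^ k) (χ₂ p) m := T_pp k χ₁ χ₂ p hp m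

lemma T_prime (p : ℕ) (hp : p.Prime) :
    T k χ₁ χ₂ p = χ₁ p * (p : ℂ) ^ k + χ₂ p := by
  have h := T_pp' k χ₁ χ₂ p hp 1
  rw [pow_one] at h
  rw [h, S]
  simp [Finset.sum_range_succ]
  ring

def HF (d : ℕ) : ArithmeticFunction ℂ :=
  ⟨fun e => if e ∣ d ∧ e ≠ 0 then χ₁ e * χ₂ e * (e : ℂ) ^ k else 0, by simp⟩

def GF (c : ℕ) : ArithmeticFunction ℂ :=
  ⟨fun n => T k χ₁ χ₂ (c * n ^ 2), by simp⟩

lemma GF_apply (c n : ℕ) : GF k χ₁ χ₂ c n = T k χ₁ χ₂ (c * n ^ 2) := rfl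

lemma HF_of_dvd {d e : ℕ} (h : e ∣ d) (he : e ≠ 0) :
    HF k χ₁ χ₂ d e = χ₁ e * χ₂ e * (e : ℂ) ^ k := by
  simp [HF, h, he]

lemma HF_of_not_dvd {d e : ℕ} (h : ¬ e ∣ d) : HF k χ₁ χ₂ d e = 0 := by
  simp [HF, h]

lemma HF_one' (e : ℕ) (he : e ≠ 0) : HF k χ₁ χ₂ e e = χ₁ e * χ₂ e * (e : ℂ) ^ k :=
  HF_of_dvd k χ₁ χ₂ dvd_rfl he

lemma HF_one : HF k χ₁ χ₂ 1 = 1 := by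
  ext e
  rcases eq_or_ne e 1 with rfl | he
  · simp [HF, chi_nat_one]
  · simp only [HF, ArithmeticFunction.coe_mk, ArithmeticFunction.one_apply, if_neg he]
    rw [if_neg]
    rintro ⟨h1, -⟩
    exact he (Nat.dvd_one.mp h1)

lemma HF_at_one (d : ℕ) : HF k χ₁ χ₂ d 1 = 1 := by
  rw [HF_of_dvd k χ₁ χ₂ (one_dvd d) one_ne_zero, chi_nat_one, chi_nat_one]
  simp

lemma HF_split {p d₂ : ℕ} (hp : p.Prime) (hpd : ¬ p ∣ d₂) :
    HF k χ₁ χ₂ (p * d₂) = HF k χ₁ χ₂ p * HF k χ₁ χ₂ d₂ := by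
  ext e
  rcases eq_or_ne e 0 with rfl | he
  · simp
  rw [ArithmeticFunction.mul_apply,
    Nat.sum_divisorsAntidiagonal (fun a b => HF k χ₁ χ₂ p a * HF k χ₁ χ₂ d₂ b)]
  by_cases hpe : p ∣ e
  · have hed₂ : ¬ e ∣ d₂ := fun h => hpd (hpe.trans h)
    by_cases hpp : p * p ∣ e
    · rw [HF_of_not_dvd _ _ _ (fun hepd => hpd ((Nat.mul_dvd_mul_iff_left hp.pos).mp
        (hpp.trans hepd)))]
      refine (Finset.sum_eq_zero ?_).symm
      intro x hx
      by_cases hxp : x ∣ p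
      · rcases (Nat.dvd_prime hp).mp hxp with rfl | hx2
        · rw [Nat.div_one, HF_of_not_dvd _ _ _ hed₂, mul_zero]
        · subst hx2
          have hpep : x ∣ e / x := (Nat.dvd_div_iff_mul_dvd hpe).mpr hpp
          rw [HF_of_not_dvd _ _ _ (fun h => hpd (hpep.trans h)), mul_zero]
      · rw [HF_of_not_dvd _ _ _ hxp, zero_mul]
    · set f := e / p with hf
      have hef : e = p * f := (Nat.mul_div_cancel' hpe).symm
      have hpf : ¬ p ∣ f := fun h => hpp (by rw [hef]; exact mul_dvd_mul_left p h)
      have hf0 : f ≠ 0 := fun h0 => he (by rw [hef, h0, mul_zero])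
      have hsub : ({1, p} : Finset ℕ) ⊆ e.divisors := by
        intro x hx
        rcases Finset.mem_insert.mp hx with rfl | hx
        · exact Nat.one_mem_divisors.mpr he
        · rw [Finset.mem_singleton] at hx
          subst hx
          exact Nat.mem_divisors.mpr ⟨hpe, he⟩
      rw [← Finset.sum_subset hsub (fun x hx hnx => by
        rw [HF_of_not_dvd _ _ _ (fun hxp => hnx (by
          rcases (Nat.dvd_prime hp).mp hxp with rfl | rfl
          · exact Finset.mem_insert_self 1 {p}
          · exact Finset.mem_insert.mpr (Or.inr (Finset.mem_singleton_self x)))), zero_mul])]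
      have hne : (1 : ℕ) ∉ ({p} : Finset ℕ) := by
        rw [Finset.mem_singleton]; exact fun h => hp.ne_one h.symm
      rw [Finset.sum_insert hne, Finset.sum_singleton, Nat.div_one,
        HF_of_not_dvd _ _ _ (d := d₂) hed₂, mul_zero, zero_add, ← hf]
      by_cases hfd : f ∣ d₂
      · rw [HF_of_dvd _ _ _ (by rw [hef]; exact mul_dvd_mul_left p hfd) he,
          HF_of_dvd _ _ _ (dvd_refl p) hp.pos.ne', HF_of_dvd _ _ _ hfd hf0, hef, chi_nat_mul,
          chi_nat_mul]
        push_cast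
        ring
      · rw [HF_of_not_dvd _ _ _ hfd, mul_zero, HF_of_not_dvd]
        intro h
        rw [hef] at h
        exact hfd ((Nat.mul_dvd_mul_iff_left hp.pos).mp h)
  · rw [Finset.sum_eq_single 1]
    · rw [Nat.div_one, HF_at_one, one_mul]
      by_cases hed : e ∣ d₂
      · rw [HF_of_dvd _ _ _ (hed.mul_left p) he, HF_of_dvd _ _ _ hed he]
      · rw [HF_of_not_dvd _ _ _ hed, HF_of_not_dvd]
        intro h
        exact hed ((Nat.Coprime.symm (hp.coprime_iff_not_dvd.mpr hpe)).dvd_of_dvd_mul_left h)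
    · intro x hx hx1
      by_cases hxp : x ∣ p
      · rcases (Nat.dvd_prime hp).mp hxp with rfl | rfl
        · exact absurd rfl hx1
        · exact absurd (Nat.dvd_of_mem_divisors hx) hpe
      · rw [HF_of_not_dvd _ _ _ hxp, zero_mul]
    · intro h
      exact absurd (Nat.one_mem_divisors.mpr he) h

lemma key {p d₂ : ℕ} (hp : p.Prime) (hpd : ¬ p ∣ d₂) (n : ℕ) :
    (HF k χ₁ χ₂ p * GF k χ₁ χ₂ (p * d₂)) n = T k χ₁ χ₂ p * GF k χ₁ χ₂ d₂ n := by
  rcases eq_or_ne n 0 with rfl | hn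
  · simp [GF]
  rw [ArithmeticFunction.mul_apply,
    Nat.sum_divisorsAntidiagonal (fun a b => HF k χ₁ χ₂ p a * GF k χ₁ χ₂ (p * d₂) b)]
  have hcop : ∀ w : ℕ, ¬ p ∣ w → Nat.Coprime p (d₂ * w ^ 2) := by
    intro w hw
    refine hp.coprime_iff_not_dvd.mpr fun h => ?_
    rcases (Nat.Prime.dvd_mul hp).mp h with h | h
    · exact hpd h
    · exact hw (hp.dvd_of_dvd_pow h)
  by_cases hpn : p ∣ n
  · -- decompose n = p^(b+1) * u
    have hnu : p ^ n.factorization p * (n / p ^ n.factorization p) = n :=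
      Nat.ordProj_mul_ordCompl_eq_self n p
    have hpu : ¬ p ∣ n / p ^ n.factorization p := Nat.not_dvd_ordCompl hp hn
    set u := n / p ^ n.factorization p with hu
    have ha1 : 1 ≤ n.factorization p :=
      (hp.pow_dvd_iff_le_factorization hn).mp (by rwa [pow_one])
    obtain ⟨b, hb⟩ : ∃ b, n.factorization p = b + 1 := ⟨n.factorization p - 1, by omega⟩
    rw [hb] at hnu
    have hu0 : u ≠ 0 := by
      intro h
      rw [h, mul_zero] at hnu
      exact hn hnu.symm
    set α := χ₁ p * (p : ℂ) ^ k with hα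
    set β := χ₂ p with hβ
    have hTd : ∀ m : ℕ, T k χ₁ χ₂ (p ^ m * (d₂ * u ^ 2)) = S α β m * T k χ₁ χ₂ (d₂ * u ^ 2) := by
      intro m
      rw [(T_mult k χ₁ χ₂).map_mul_of_coprime (Nat.Coprime.pow_left m (hcop u hpu)),
        T_pp' k χ₁ χ₂ p hp m]
    have hsub : ({1, p} : Finset ℕ) ⊆ n.divisors := by
      intro x hx
      rcases Finset.mem_insert.mp hx with rfl | hx
      · exact Nat.one_mem_divisors.mpr hn
      · rw [Finset.mem_singleton] at hx
        subst hx
        exact Nat.mem_divisors.mpr ⟨hpn, hn⟩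
    rw [← Finset.sum_subset hsub (fun x hx hnx => by
      rw [HF_of_not_dvd _ _ _ (fun hxp => hnx (by
        rcases (Nat.dvd_prime hp).mp hxp with rfl | rfl
        · exact Finset.mem_insert_self 1 {p}
        · exact Finset.mem_insert.mpr (Or.inr (Finset.mem_singleton_self x)))), zero_mul])]
    have hne : (1 : ℕ) ∉ ({p} : Finset ℕ) := by
      rw [Finset.mem_singleton]; exact fun h => hp.ne_one h.symm
    rw [Finset.sum_insert hne, Finset.sum_singleton, Nat.div_one, HF_at_one,
      HF_one' k χ₁ χ₂ p hp.pos.ne', one_mul]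
    have hnval : n = p ^ (b + 1) * u := hnu.symm
    have hnp : n / p = p ^ b * u := by
      rw [hnval, pow_succ, mul_comm (p ^ b) p, mul_assoc]
      exact Nat.mul_div_cancel_left _ hp.pos
    have e1 : p * d₂ * n ^ 2 = p ^ (2 * b + 3) * (d₂ * u ^ 2) := by
      rw [hnval]; ring
    have e2 : p * d₂ * (n / p) ^ 2 = p ^ (2 * b + 1) * (d₂ * u ^ 2) := by
      rw [hnp]; ring
    have e3 : d₂ * n ^ 2 = p ^ (2 * b + 2) * (d₂ * u ^ 2) := by
      rw [hnval]; ring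
    rw [GF_apply, GF_apply, GF_apply, e1, e2, e3, hTd, hTd, hTd, T_prime k χ₁ χ₂ p hp, ← hα, ← hβ]
    have hrec := S_rec α β (2 * b + 1)
    have h23 : 2 * b + 1 + 2 = 2 * b + 3 := by omega
    have h22 : 2 * b + 1 + 1 = 2 * b + 2 := by omega
    rw [h23, h22] at hrec
    linear_combination T k χ₁ χ₂ (d₂ * u ^ 2) * hrec
  · rw [Finset.sum_eq_single 1]
    · rw [Nat.div_one, HF_at_one, one_mul, GF_apply, GF_apply, mul_assoc,
        (T_mult k χ₁ χ₂).map_mul_of_coprime (hcop n hpn)]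
    · intro x hx hx1
      by_cases hxp : x ∣ p
      · rcases (Nat.dvd_prime hp).mp hxp with rfl | rfl
        · exact absurd rfl hx1
        · exact absurd (Nat.dvd_of_mem_divisors hx) hpn
      · rw [HF_of_not_dvd _ _ _ hxp, zero_mul]
    · intro h
      exact absurd (Nat.one_mem_divisors.mpr hn) h

lemma mul_congr_scal (A X G : ArithmeticFunction ℂ) (z : ℂ) (h : ∀ m, X m = z * G m) (n : ℕ) :
    (A * X) n = z * (A * G) n := by
  rw [ArithmeticFunction.mul_apply, ArithmeticFunction.mul_apply, Finset.mul_sum]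
  exact Finset.sum_congr rfl fun pq _ => by rw [h]; ring

lemma conv_eq : ∀ d, Squarefree d → ∀ n,
    (HF k χ₁ χ₂ d * GF k χ₁ χ₂ d) n = T k χ₁ χ₂ d * GF k χ₁ χ₂ 1 n := by
  intro d
  induction d using Nat.strong_induction_on with
  | _ d IH =>
    intro hd n
    rcases eq_or_ne d 1 with rfl | hd1
    · rw [HF_one, one_mul, T_one, one_mul]
    · have hd0 : d ≠ 0 := hd.ne_zero
      have hp : d.minFac.Prime := Nat.minFac_prime hd1
      set p := d.minFac with hpdef
      set d₂ := d / p with hd₂def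
      have hpd₂mul : d = p * d₂ := (Nat.mul_div_cancel' d.minFac_dvd).symm
      have hpd : ¬ p ∣ d₂ := by
        intro h
        have hpp : p * p ∣ d := by
          rw [hpd₂mul]; exact mul_dvd_mul_left p h
        exact hp.ne_one (Nat.isUnit_iff.mp (hd p hpp))
      have hd₂sq : Squarefree d₂ := hd.squarefree_of_dvd (Nat.div_dvd_of_dvd d.minFac_dvd)
      have hlt : d₂ < d := Nat.div_lt_self (Nat.pos_of_ne_zero hd0) hp.one_lt
      rw [hpd₂mul, HF_split k χ₁ χ₂ hp hpd, mul_comm (HF k χ₁ χ₂ p) (HF k χ₁ χ₂ d₂), mul_assoc,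
        mul_congr_scal _ _ (GF k χ₁ χ₂ d₂) (T k χ₁ χ₂ p) (key k χ₁ χ₂ hp hpd) n,
        IH d₂ hlt hd₂sq n, (T_mult k χ₁ χ₂).map_mul_of_coprime (hp.coprime_iff_not_dvd.mpr hpd)]
      ring

lemma norm_T_le (hk : k ≠ 0) (m : ℕ) (hm : m ≠ 0) :
    ‖T k χ₁ χ₂ m‖ ≤ (m : ℝ) ^ k * (1 + Real.log m) := by
  have hm1 : 1 ≤ (m : ℝ) := Nat.one_le_cast.mpr (Nat.pos_of_ne_zero hm)
  rw [T_apply, twistedSigma]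
  calc ‖∑ δ ∈ m.divisors, χ₁ δ * χ₂ (m / δ) * (δ : ℂ) ^ (k : ℤ)‖
      ≤ ∑ δ ∈ m.divisors, ‖χ₁ δ * χ₂ (m / δ) * (δ : ℂ) ^ (k : ℤ)‖ := norm_sum_le _ _
    _ ≤ ∑ δ ∈ m.divisors, (δ : ℝ) ^ k := by
        refine Finset.sum_le_sum fun δ hδ => ?_
        rw [norm_mul, norm_mul, zpow_natCast, norm_pow, Complex.norm_natCast]
        have h1 : ‖χ₁ (δ : ZMod N₁)‖ ≤ 1 := DirichletCharacter.norm_le_one χ₁ _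
        have h2 : ‖χ₂ ((m / δ : ℕ) : ZMod N₂)‖ ≤ 1 := DirichletCharacter.norm_le_one χ₂ _
        have hp : (0:ℝ) ≤ (δ : ℝ) ^ k := by positivity
        have h12 : ‖χ₁ (δ : ZMod N₁)‖ * ‖χ₂ ((m / δ : ℕ) : ZMod N₂)‖ ≤ 1 :=
          mul_le_one₀ h1 (norm_nonneg _) h2
        calc ‖χ₁ (δ : ZMod N₁)‖ * ‖χ₂ ((m / δ : ℕ) : ZMod N₂)‖ * (δ : ℝ) ^ k
            ≤ 1 * (δ : ℝ) ^ k := mul_le_mul_of_nonneg_right h12 hp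
          _ = (δ : ℝ) ^ k := one_mul _
    _ = ∑ δ ∈ m.divisors, ((m / δ : ℕ) : ℝ) ^ k :=
        (Nat.sum_div_divisors m (fun δ => (δ : ℝ) ^ k)).symm
    _ ≤ ∑ δ ∈ m.divisors, (m : ℝ) ^ k * (δ : ℝ)⁻¹ := by
        refine Finset.sum_le_sum fun δ hδ => ?_
        have hδd : δ ∣ m := Nat.dvd_of_mem_divisors hδ
        have hδ0 : 0 < δ := Nat.pos_of_mem_divisors hδ
        have hδ1 : 1 ≤ (δ : ℝ) := Nat.one_le_cast.mpr hδ0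
        have hcast : ((m / δ : ℕ) : ℝ) = (m : ℝ) / (δ : ℝ) :=
          Nat.cast_div hδd (by positivity)
        rw [hcast, div_pow, div_eq_mul_inv]
        have hδk : (δ:ℝ) ≤ (δ:ℝ) ^ k := le_self_pow₀ hδ1 hk
        have hinv : ((δ:ℝ) ^ k)⁻¹ ≤ (δ:ℝ)⁻¹ := inv_anti₀ (by positivity) hδk
        exact mul_le_mul_of_nonneg_left hinv (by positivity)
    _ = (m : ℝ) ^ k * ∑ δ ∈ m.divisors, (δ : ℝ)⁻¹ := by rw [Finset.mul_sum]
    _ ≤ (m : ℝ) ^ k * (1 + Real.log m) := by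
        have hsum : ∑ δ ∈ m.divisors, (δ : ℝ)⁻¹ ≤ 1 + Real.log m := by
          have hsub : m.divisors ⊆ Finset.Icc 1 m := by
            intro δ hδ
            exact Finset.mem_Icc.mpr ⟨Nat.pos_of_mem_divisors hδ,
              Nat.le_of_dvd (Nat.pos_of_ne_zero hm) (Nat.dvd_of_mem_divisors hδ)⟩
          calc ∑ δ ∈ m.divisors, (δ : ℝ)⁻¹
              ≤ ∑ δ ∈ Finset.Icc 1 m, (δ : ℝ)⁻¹ :=
                Finset.sum_le_sum_of_subset_of_nonneg hsub (fun i _ _ => by positivity)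
            _ = (harmonic m : ℝ) := by
                rw [harmonic_eq_sum_Icc]; push_cast; rfl
            _ ≤ 1 + Real.log m := harmonic_le_one_add_log m
        have : (0:ℝ) ≤ (m : ℝ) ^ k := by positivity
        exact mul_le_mul_of_nonneg_left hsum this

lemma log_le_rpow_div {x t : ℝ} (hx : 1 ≤ x) (ht : 0 < t) : Real.log x ≤ x ^ t / t := by
  have hx0 : 0 < x := lt_of_lt_of_le zero_lt_one hx
  have h := Real.log_le_sub_one_of_pos (Real.rpow_pos_of_pos hx0 t)
  rw [Real.log_rpow hx0] at h
  have h2 : t * Real.log x ≤ x ^ t := by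
    have : (0:ℝ) ≤ x ^ t := le_of_lt (Real.rpow_pos_of_pos hx0 t)
    linarith
  calc Real.log x = t * Real.log x / t := by field_simp
    _ ≤ x ^ t / t := by gcongr

/-- master bound : `‖T m‖ ≤ C * n ^ (2k + t)` whenever `m ≤ c * n²`. -/
lemma master_bound (hk : k ≠ 0) {c : ℕ} (hc : c ≠ 0) {t : ℝ} (ht : 0 < t)
    {n m : ℕ} (hn : n ≠ 0) (hm : m ≠ 0) (hle : m ≤ c * n ^ 2) :
    ‖T k χ₁ χ₂ m‖ ≤ ((c : ℝ) ^ k * (1 + Real.log c + 2 / t)) * (n : ℝ) ^ ((2 * k : ℝ) + t) := by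
  have hn1 : 1 ≤ (n : ℝ) := Nat.one_le_cast.mpr (Nat.pos_of_ne_zero hn)
  have hc1 : 1 ≤ (c : ℝ) := Nat.one_le_cast.mpr (Nat.pos_of_ne_zero hc)
  have hm1 : 1 ≤ (m : ℝ) := Nat.one_le_cast.mpr (Nat.pos_of_ne_zero hm)
  have hlogc : 0 ≤ Real.log c := Real.log_nonneg hc1
  have hnt1 : 1 ≤ (n : ℝ) ^ t := Real.one_le_rpow hn1 ht.le
  have hcn : (m : ℝ) ≤ (c : ℝ) * (n : ℝ) ^ 2 := by
    calc (m:ℝ) ≤ ((c * n ^ 2 : ℕ) : ℝ) := Nat.cast_le.mpr hle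
      _ = (c : ℝ) * (n : ℝ) ^ 2 := by push_cast; ring
  calc ‖T k χ₁ χ₂ m‖ ≤ (m : ℝ) ^ k * (1 + Real.log m) := norm_T_le k χ₁ χ₂ hk m hm
    _ ≤ ((c : ℝ) * (n : ℝ) ^ 2) ^ k * (1 + Real.log ((c : ℝ) * (n : ℝ) ^ 2)) := by
        have hlog : Real.log m ≤ Real.log ((c : ℝ) * (n : ℝ) ^ 2) :=
          Real.log_le_log (by positivity) hcn
        have h1 : (m : ℝ) ^ k ≤ ((c : ℝ) * (n : ℝ) ^ 2) ^ k :=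
          pow_le_pow_left₀ (by positivity) hcn k
        have hlm : 0 ≤ 1 + Real.log m := by
          have := Real.log_nonneg hm1; linarith
        have := mul_le_mul h1 (by linarith : 1 + Real.log m ≤ 1 + Real.log ((c:ℝ) * (n:ℝ)^2))
          hlm (by positivity)
        exact this
    _ ≤ ((c : ℝ) ^ k * (1 + Real.log c + 2 / t)) * (n : ℝ) ^ ((2 * k : ℝ) + t) := by
        have hlogsplit : Real.log ((c : ℝ) * (n : ℝ) ^ 2) = Real.log c + 2 * Real.log n := by
          rw [Real.log_mul (by positivity) (by positivity), Real.log_pow]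
          push_cast; ring
        have hlogn : Real.log n ≤ (n : ℝ) ^ t / t := log_le_rpow_div hn1 ht
        have hmulpow : ((c : ℝ) * (n : ℝ) ^ 2) ^ k = (c : ℝ) ^ k * (n : ℝ) ^ (2 * k) := by
          rw [mul_pow, ← pow_mul]
        have hrpow : (n : ℝ) ^ ((2 * k : ℝ) + t) = (n : ℝ) ^ (2 * k) * (n : ℝ) ^ t := by
          rw [Real.rpow_add (by positivity), ← Real.rpow_natCast (n : ℝ) (2 * k)]
          push_cast; ring_nf
        rw [hmulpow, hlogsplit, hrpow, ← add_assoc]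
        have key : 1 + Real.log c + 2 * Real.log n ≤ (1 + Real.log c + 2 / t) * (n : ℝ) ^ t := by
          have h2 : 2 * Real.log n ≤ (2 / t) * (n : ℝ) ^ t := by
            rw [div_mul_eq_mul_div]
            have := mul_le_mul_of_nonneg_left hlogn (by norm_num : (0:ℝ) ≤ 2)
            calc 2 * Real.log n ≤ 2 * ((n:ℝ) ^ t / t) := this
              _ = 2 * (n:ℝ) ^ t / t := by ring
          have h3 : 1 + Real.log c ≤ (1 + Real.log c) * (n : ℝ) ^ t := by
            nlinarith
          nlinarith
        calc (c : ℝ) ^ k * (n : ℝ) ^ (2 * k) * (1 + Real.log c + 2 * Real.log n)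
            ≤ (c : ℝ) ^ k * (n : ℝ) ^ (2 * k) * ((1 + Real.log c + 2 / t) * (n : ℝ) ^ t) := by
              have : (0:ℝ) ≤ (c : ℝ) ^ k * (n : ℝ) ^ (2 * k) := by positivity
              exact mul_le_mul_of_nonneg_left key this
          _ = (c : ℝ) ^ k * (1 + Real.log c + 2 / t) * ((n : ℝ) ^ (2 * k) * (n : ℝ) ^ t) := by
              ring

lemma tele : ∀ N : ℕ, 1 ≤ N →
    ∑ e ∈ Finset.Icc 2 N, ((e : ℝ) * ((e : ℝ) - 1))⁻¹ = 1 - (N : ℝ)⁻¹ := by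
  intro N
  induction N with
  | zero => omega
  | succ n ih =>
    intro _
    rcases Nat.eq_zero_or_pos n with rfl | hn
    · simp
    · rw [Finset.sum_Icc_succ_top (by omega : 2 ≤ n + 1), ih hn]
      have hn1 : (1:ℝ) ≤ (n:ℝ) := Nat.one_le_cast.mpr hn
      have h0 : (n:ℝ) ≠ 0 := by positivity
      have h1 : ((n:ℕ):ℝ) + 1 ≠ 0 := by positivity
      push_cast
      field_simp
      ring_nf
      simp [h0]

lemma sigmaC_ne_zero {M : ℕ} (ψ : DirichletCharacter ℂ M) {κ : ℂ} (hκ : κ.re ≤ -2)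
    {d : ℕ} (hd : d ≠ 0) : sigmaC κ ψ d ≠ 0 := by
  have h1div : (1:ℕ) ∈ d.divisors := Nat.one_mem_divisors.mpr hd
  rw [sigmaC, ← Finset.add_sum_erase _ _ h1div]
  have hone : ψ ((1:ℕ) : ZMod M) * ((1:ℕ):ℂ) ^ κ = 1 := by
    simp [one_cpow]
  rw [hone]
  intro hcontra
  have hR : ‖∑ e ∈ d.divisors.erase 1, ψ e * (e:ℂ) ^ κ‖ < 1 := by
    have hd1 : 1 ≤ d := Nat.pos_of_ne_zero hd
    calc ‖∑ e ∈ d.divisors.erase 1, ψ e * (e:ℂ) ^ κ‖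
        ≤ ∑ e ∈ d.divisors.erase 1, ‖ψ e * (e:ℂ) ^ κ‖ := norm_sum_le _ _
      _ ≤ ∑ e ∈ d.divisors.erase 1, ((e : ℝ) * ((e : ℝ) - 1))⁻¹ := by
          refine Finset.sum_le_sum fun e he => ?_
          have he1 : e ≠ 1 := Finset.ne_of_mem_erase he
          have hed : e ∈ d.divisors := Finset.mem_of_mem_erase he
          have he0 : 0 < e := Nat.pos_of_mem_divisors hed
          have he2 : 2 ≤ e := by omega
          have he2R : (2:ℝ) ≤ (e:ℝ) := by exact_mod_cast he2
          rw [norm_mul]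
          have hc : ‖(e:ℂ) ^ κ‖ = (e:ℝ) ^ κ.re := norm_natCast_cpow_of_pos he0 κ
          have hψe : ‖ψ (e : ZMod M)‖ ≤ 1 := DirichletCharacter.norm_le_one ψ _
          have hb1 : (e:ℝ) ^ κ.re ≤ (e:ℝ) ^ (-2:ℝ) :=
            Real.rpow_le_rpow_of_exponent_le (by linarith) hκ
          have hb2 : (e:ℝ) ^ (-2:ℝ) = ((e:ℝ) ^ (2:ℕ))⁻¹ := by
            rw [← Real.rpow_natCast (e:ℝ) 2, ← Real.rpow_neg (by positivity)]
            norm_num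
          have hb3 : ((e:ℝ) ^ (2:ℕ))⁻¹ ≤ ((e : ℝ) * ((e : ℝ) - 1))⁻¹ := by
            apply inv_anti₀ (by nlinarith)
            nlinarith
          calc ‖ψ (e : ZMod M)‖ * ‖(e:ℂ) ^ κ‖ ≤ 1 * ((e:ℝ) ^ κ.re) := by
                rw [hc]
                exact mul_le_mul_of_nonneg_right hψe (by positivity)
            _ = (e:ℝ) ^ κ.re := one_mul _
            _ ≤ ((e : ℝ) * ((e : ℝ) - 1))⁻¹ := le_trans hb1 (le_of_eq hb2 |>.trans hb3)
      _ ≤ ∑ e ∈ Finset.Icc 2 d, ((e : ℝ) * ((e : ℝ) - 1))⁻¹ := by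
          refine Finset.sum_le_sum_of_subset_of_nonneg ?_ ?_
          · intro e he
            have he1 : e ≠ 1 := Finset.ne_of_mem_erase he
            have hed : e ∈ d.divisors := Finset.mem_of_mem_erase he
            have he0 : 0 < e := Nat.pos_of_mem_divisors hed
            exact Finset.mem_Icc.mpr ⟨by omega,
              Nat.le_of_dvd (Nat.pos_of_ne_zero hd) (Nat.dvd_of_mem_divisors hed)⟩
          · intro e he _
            have he2 : 2 ≤ e := (Finset.mem_Icc.mp he).1
            have h2e : (2:ℝ) ≤ (e:ℝ) := by exact_mod_cast he2
            have hpos : (0:ℝ) < (e:ℝ) * ((e:ℝ) - 1) := by nlinarith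
            exact inv_nonneg.mpr hpos.le
      _ = 1 - (d : ℝ)⁻¹ := tele d hd1
      _ < 1 := by
          have : (0:ℝ) < (d:ℝ)⁻¹ := by positivity
          linarith
  have hsum : ∑ e ∈ d.divisors.erase 1, ψ e * (e:ℂ) ^ κ = -1 :=
    eq_neg_of_add_eq_zero_right hcontra
  rw [hsum, norm_neg, norm_one] at hR
  exact lt_irrefl 1 hR

lemma LSeriesSummable_HF {d : ℕ} (hd : d ≠ 0) (s : ℂ) :
    LSeriesSummable (fun n => HF k χ₁ χ₂ d n) s := by
  apply summable_of_ne_finset_zero (s := d.divisors)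
  intro n hn
  rcases eq_or_ne n 0 with rfl | hn0
  · exact LSeries.term_zero _ _
  · rw [LSeries.term_of_ne_zero hn0, HF_of_not_dvd _ _ _
      (fun hnd => hn (Nat.mem_divisors.mpr ⟨hnd, hd⟩)), zero_div]

lemma LSeries_HF {d : ℕ} (hd : d ≠ 0) (s : ℂ) :
    LSeries (fun n => HF k χ₁ χ₂ d n) s = sigmaC ((k : ℂ) - s) (prodChar χ₁ χ₂) d := by
  rw [LSeries, tsum_eq_sum (s := d.divisors) (fun n hn => by
    rcases eq_or_ne n 0 with rfl | hn0
    · exact LSeries.term_zero _ _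
    · rw [LSeries.term_of_ne_zero hn0, HF_of_not_dvd _ _ _
        (fun hnd => hn (Nat.mem_divisors.mpr ⟨hnd, hd⟩)), zero_div]), sigmaC]
  refine Finset.sum_congr rfl fun e he => ?_
  have he0 : e ≠ 0 := (Nat.pos_of_mem_divisors he).ne'
  have heC : (e : ℂ) ≠ 0 := Nat.cast_ne_zero.mpr he0
  rw [LSeries.term_of_ne_zero he0, HF_of_dvd _ _ _ (Nat.dvd_of_mem_divisors he) he0,
    prodChar_apply, Complex.cpow_sub _ _ heC, Complex.cpow_natCast]
  ring

lemma LSeries_const_mul (a : ℂ) (f : ℕ → ℂ) (s : ℂ) :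
    LSeries (fun n => a * f n) s = a * LSeries f s := by
  rw [LSeries, LSeries, ← tsum_mul_left]
  apply tsum_congr
  intro n
  rw [LSeries.term_def, LSeries.term_def]
  split_ifs with h
  · simp
  · ring

lemma summable_aux (hk : k ≠ 0) {c : ℕ} (hc : c ≠ 0) {s : ℂ} (hs : 2 * (k : ℝ) + 1 < s.re)
    (f : ℕ → ℂ)
    (hf : ∀ n, n ≠ 0 → f n = 0 ∨ ∃ m, m ≠ 0 ∧ m ≤ c * n ^ 2 ∧ f n = T k χ₁ χ₂ m) :
    LSeriesSummable f s := by
  set t := (s.re - (2 * (k : ℝ) + 1)) / 2 with htdef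
  have ht : 0 < t := by rw [htdef]; linarith
  have hC : 0 ≤ (c : ℝ) ^ k * (1 + Real.log c + 2 / t) := by
    have hc1 : 1 ≤ (c : ℝ) := Nat.one_le_cast.mpr (Nat.pos_of_ne_zero hc)
    have h1 : 0 ≤ Real.log c := Real.log_nonneg hc1
    have h2 : 0 < 2 / t := by positivity
    positivity
  apply LSeriesSummable_of_le_const_mul_rpow (x := 2 * (k : ℝ) + t + 1)
  · rw [htdef]; linarith
  · refine ⟨(c : ℝ) ^ k * (1 + Real.log c + 2 / t), fun n hn => ?_⟩
    have hexp : 2 * (k : ℝ) + t + 1 - 1 = (2 * k : ℝ) + t := by push_cast; ring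
    rw [hexp]
    rcases hf n hn with h | ⟨m, hm0, hmle, hfm⟩
    · rw [h, norm_zero]
      positivity
    · rw [hfm]
      exact master_bound k χ₁ χ₂ hk hc ht hn hm0 hmle

end TSAux

theorem twisted_sigma_divisibility_restricted
    {N₁ N₂ : ℕ}
    (k : ℕ) (hk : 0 < k)
    (χ₁ : DirichletCharacter ℂ N₁) (χ₂ : DirichletCharacter ℂ N₂)
    (j : ℕ) (δ' : ℕ) (hδ'odd : Odd δ') (hδ'sqf : Squarefree δ')
    (δ : ℕ) (hδ : δ = 2 ^ j * δ')
    (ε : ℕ) (hε : ε = if Even j then 0 else 1)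
    (s : ℂ) (hs : 2 * (k : ℝ) + 1 < s.re) :
    sigmaC ((k : ℂ) - s) (prodChar χ₁ χ₂) (2 ^ ε * δ') ≠ 0 ∧
    LSeriesSummable (fun n => if δ ∣ n ^ 2 then twistedSigma k χ₁ χ₂ (n ^ 2 / δ) else 0) s ∧
    LSeriesSummable (fun n => twistedSigma k χ₁ χ₂ (n ^ 2)) s ∧
    LSeries (fun n => if δ ∣ n ^ 2 then twistedSigma k χ₁ χ₂ (n ^ 2 / δ) else 0) s
      = ((2 ^ ((j + 1) / 2) * δ' : ℕ) : ℂ) ^ (-s)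
          * twistedSigma k χ₁ χ₂ (2 ^ ε * δ')
          / sigmaC ((k : ℂ) - s) (prodChar χ₁ χ₂) (2 ^ ε * δ')
          * LSeries (fun n => twistedSigma k χ₁ χ₂ (n ^ 2)) s := by
  classical
  have hk0 : k ≠ 0 := hk.ne'
  have hδ'0 : δ' ≠ 0 := by
    rintro rfl
    exact (by decide : ¬ Odd 0) hδ'odd
  have h2δ' : ¬ 2 ∣ δ' := by
    rw [Nat.two_dvd_ne_zero, ← Nat.odd_iff]
    exact hδ'odd
  have hcop2 : Nat.Coprime 2 δ' := Nat.prime_two.coprime_iff_not_dvd.mpr h2δ'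
  set d := 2 ^ ε * δ' with hddef
  have hd0 : d ≠ 0 := mul_ne_zero (pow_ne_zero _ two_ne_zero) hδ'0
  have hδ0 : δ ≠ 0 := by rw [hδ]; exact mul_ne_zero (pow_ne_zero _ two_ne_zero) hδ'0
  have hdsq : Squarefree d := by
    rcases Nat.even_or_odd j with hj | hj
    · rw [hddef, hε, if_pos hj, pow_zero, one_mul]
      exact hδ'sqf
    · rw [hddef, hε, if_neg (Nat.not_even_iff_odd.mpr hj), pow_one]
      exact (Nat.squarefree_mul hcop2).mpr ⟨Nat.prime_two.squarefree, hδ'sqf⟩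
  set c := (j + 1) / 2 with hcdef
  set m0 := 2 ^ c * δ' with hm0def
  have hm00 : m0 ≠ 0 := mul_ne_zero (pow_ne_zero _ two_ne_zero) hδ'0
  have h2c : 2 * c = j + ε := by
    rw [hcdef, hε]
    rcases Nat.even_or_odd j with hj | hj
    · obtain ⟨r, rfl⟩ := hj
      rw [if_pos ⟨r, rfl⟩]
      omega
    · rw [if_neg (Nat.not_even_iff_odd.mpr hj)]
      obtain ⟨r, rfl⟩ := hj
      omega
  have hsqeq : ∀ r : ℕ, (m0 * r) ^ 2 = δ * (d * r ^ 2) := by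
    intro r
    have e1 : (m0 * r) ^ 2 = 2 ^ (2 * c) * (δ' * (δ' * r ^ 2)) := by
      rw [hm0def]; ring
    rw [e1, h2c, pow_add, hδ, hddef]
    ring
  have hiff : ∀ n : ℕ, n ≠ 0 → (δ ∣ n ^ 2 ↔ m0 ∣ n) := by
    intro n hn
    constructor
    · intro h
      have hn2 : n ^ 2 ≠ 0 := pow_ne_zero _ hn
      have h2j : (2:ℕ) ^ j ∣ n ^ 2 := dvd_trans ⟨δ', hδ⟩ h
      have hδ'n2 : δ' ∣ n ^ 2 := dvd_trans (by rw [hδ]; exact dvd_mul_left δ' (2 ^ j)) h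
      have hδ'n : δ' ∣ n := (hδ'sqf.dvd_pow_iff_dvd two_ne_zero).mp hδ'n2
      have hv : j ≤ (n ^ 2).factorization 2 :=
        (Nat.prime_two.pow_dvd_iff_le_factorization hn2).mp h2j
      rw [Nat.factorization_pow] at hv
      have hv' : j ≤ 2 * n.factorization 2 := by simpa using hv
      have hcv : c ≤ n.factorization 2 := by omega
      have h2cn : (2:ℕ) ^ c ∣ n := (Nat.prime_two.pow_dvd_iff_le_factorization hn).mpr hcv
      exact (Nat.Coprime.pow_left c hcop2).mul_dvd_of_dvd_of_dvd h2cn hδ'n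
    · rintro ⟨r, rfl⟩
      exact ⟨d * r ^ 2, hsqeq r⟩
  have hquot : ∀ r : ℕ, (m0 * r) ^ 2 / δ = d * r ^ 2 := by
    intro r
    rw [hsqeq r]
    exact Nat.mul_div_cancel_left _ (Nat.pos_of_ne_zero hδ0)
  have hkre : ((k : ℂ) - s).re ≤ -2 := by
    rw [Complex.sub_re, Complex.natCast_re]
    have hk1 : (1:ℝ) ≤ (k:ℝ) := Nat.one_le_cast.mpr hk
    linarith
  have hσ : sigmaC ((k : ℂ) - s) (prodChar χ₁ χ₂) d ≠ 0 :=
    TSAux.sigmaC_ne_zero (prodChar χ₁ χ₂) hkre hd0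
  have hressum : LSeriesSummable
      (fun n => if δ ∣ n ^ 2 then twistedSigma k χ₁ χ₂ (n ^ 2 / δ) else 0) s := by
    apply TSAux.summable_aux k χ₁ χ₂ hk0 (c := 1) one_ne_zero hs
    intro n hn
    by_cases hdvd : δ ∣ n ^ 2
    · right
      refine ⟨n ^ 2 / δ, ?_, ?_, ?_⟩
      · have hle : δ ≤ n ^ 2 := Nat.le_of_dvd (Nat.pos_of_ne_zero (pow_ne_zero _ hn)) hdvd
        exact (Nat.div_pos hle (Nat.pos_of_ne_zero hδ0)).ne'
      · rw [one_mul]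
        exact Nat.div_le_self _ _
      · rw [if_pos hdvd, TSAux.T_apply]
    · left
      rw [if_neg hdvd]
  have hFsum : LSeriesSummable (fun n => twistedSigma k χ₁ χ₂ (n ^ 2)) s := by
    apply TSAux.summable_aux k χ₁ χ₂ hk0 (c := 1) one_ne_zero hs
    intro n hn
    right
    exact ⟨n ^ 2, pow_ne_zero _ hn, by rw [one_mul], (TSAux.T_apply k χ₁ χ₂ _).symm⟩
  have hgsum : LSeriesSummable (fun r => twistedSigma (k : ℤ) χ₁ χ₂ (d * r ^ 2)) s := by
    apply TSAux.summable_aux k χ₁ χ₂ hk0 (c := d) hd0 hs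
    intro n hn
    right
    exact ⟨d * n ^ 2, mul_ne_zero hd0 (pow_ne_zero _ hn), le_rfl,
      (TSAux.T_apply k χ₁ χ₂ _).symm⟩
  have hHsum := TSAux.LSeriesSummable_HF k χ₁ χ₂ hd0 s
  have hGFg : (fun n => TSAux.GF k χ₁ χ₂ d n)
      = (fun r => twistedSigma (k : ℤ) χ₁ χ₂ (d * r ^ 2)) := by
    funext r
    rw [TSAux.GF_apply, TSAux.T_apply]
  have hgsum' : LSeriesSummable (fun n => TSAux.GF k χ₁ χ₂ d n) s := hGFg ▸ hgsum
  have heq1 : sigmaC ((k : ℂ) - s) (prodChar χ₁ χ₂) d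
        * LSeries (fun r => twistedSigma (k : ℤ) χ₁ χ₂ (d * r ^ 2)) s
      = twistedSigma (k : ℤ) χ₁ χ₂ d
        * LSeries (fun n => twistedSigma (k : ℤ) χ₁ χ₂ (n ^ 2)) s := by
    have hconvpt : (fun n => (TSAux.HF k χ₁ χ₂ d * TSAux.GF k χ₁ χ₂ d) n)
        = fun n => twistedSigma (k : ℤ) χ₁ χ₂ d * twistedSigma (k : ℤ) χ₁ χ₂ (n ^ 2) := by
      funext n
      rw [TSAux.conv_eq k χ₁ χ₂ d hdsq n, TSAux.GF_apply, one_mul, TSAux.T_apply,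
        TSAux.T_apply]
    calc sigmaC ((k : ℂ) - s) (prodChar χ₁ χ₂) d
          * LSeries (fun r => twistedSigma (k : ℤ) χ₁ χ₂ (d * r ^ 2)) s
        = LSeries (fun n => TSAux.HF k χ₁ χ₂ d n) s
            * LSeries (fun n => TSAux.GF k χ₁ χ₂ d n) s := by
          rw [TSAux.LSeries_HF k χ₁ χ₂ hd0 s, hGFg]
      _ = LSeries (fun n => (TSAux.HF k χ₁ χ₂ d * TSAux.GF k χ₁ χ₂ d) n) s :=
          (ArithmeticFunction.LSeries_mul' hHsum hgsum').symm
      _ = LSeries (fun n => twistedSigma (k : ℤ) χ₁ χ₂ d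
            * twistedSigma (k : ℤ) χ₁ χ₂ (n ^ 2)) s := by rw [hconvpt]
      _ = twistedSigma (k : ℤ) χ₁ χ₂ d
            * LSeries (fun n => twistedSigma (k : ℤ) χ₁ χ₂ (n ^ 2)) s :=
          TSAux.LSeries_const_mul _ _ s
  have hres : LSeries (fun n => if δ ∣ n ^ 2 then twistedSigma (k : ℤ) χ₁ χ₂ (n ^ 2 / δ)
        else 0) s
      = ((m0 : ℕ) : ℂ) ^ (-s) * LSeries (fun r => twistedSigma (k : ℤ) χ₁ χ₂ (d * r ^ 2)) s := by
    set fres : ℕ → ℂ := fun n => if δ ∣ n ^ 2 then twistedSigma (k : ℤ) χ₁ χ₂ (n ^ 2 / δ) else 0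
      with hfres
    have hinj : Function.Injective (fun r : ℕ => m0 * r) := fun a b h =>
      Nat.eq_of_mul_eq_mul_left (Nat.pos_of_ne_zero hm00) h
    have hsupp : Function.support (LSeries.term fres s) ⊆ Set.range (fun r : ℕ => m0 * r) := by
      intro n hn
      rcases eq_or_ne n 0 with rfl | hn0
      · exact ⟨0, by simp⟩
      have hfn : fres n ≠ 0 := by
        intro h0
        apply hn
        rw [LSeries.term_of_ne_zero hn0, h0, zero_div]
      have hdvd : δ ∣ n ^ 2 := by
        by_contra h
        exact hfn (if_neg h)
      obtain ⟨r, hr⟩ := (hiff n hn0).mp hdvd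
      exact ⟨r, hr.symm⟩
    rw [LSeries, ← hinj.tsum_eq hsupp, LSeries, ← tsum_mul_left]
    apply tsum_congr
    intro r
    rcases eq_or_ne r 0 with rfl | hr
    · simp
    · have hmr : m0 * r ≠ 0 := mul_ne_zero hm00 hr
      rw [LSeries.term_of_ne_zero hmr, LSeries.term_of_ne_zero hr]
      have hval : fres (m0 * r) = twistedSigma (k : ℤ) χ₁ χ₂ (d * r ^ 2) := by
        rw [hfres]
        simp only
        rw [if_pos ((hiff (m0 * r) hmr).mpr ⟨r, rfl⟩), hquot r]
      rw [hval, Nat.cast_mul, Complex.natCast_mul_natCast_cpow, Complex.cpow_neg,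
        div_eq_mul_inv, div_eq_mul_inv, mul_inv]
      ring
  refine ⟨hσ, hressum, hFsum, ?_⟩
  rw [hres]
  have hg : LSeries (fun r => twistedSigma (k : ℤ) χ₁ χ₂ (d * r ^ 2)) s
      = twistedSigma (k : ℤ) χ₁ χ₂ d
        * LSeries (fun n => twistedSigma (k : ℤ) χ₁ χ₂ (n ^ 2)) s
        / sigmaC ((k : ℂ) - s) (prodChar χ₁ χ₂) d := by
    rw [eq_div_iff hσ]
    linear_combination heq1
  rw [hg]
  ring
end
end
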